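/- arXiv:2602.05860 — 9 statements merged into one kernel-verified Lean document; each statement's English description precedes it below -/
import Mathlib

section
/- Let (A, ·, ω) be a simple n-Lie Poisson algebra over a field of characteristic zero. Then the associative commutative algebra A contains no nonzero nilpotent elements. -/
lemma nat_cancel (F : Type*) [Field F] [CharZero F] {A : Type*} [CommRing A] [Algebra F A]
    (c : ℕ) (hc : c ≠ 0) (x : A) (h : c • x = 0) : x = 0 := by
  have h2 : ((c : F)) • x = 0 := by rw [Nat.cast_smul_eq_nsmul]; exact h
  have h3 := congrArg (fun y => ((c : F)⁻¹) • y) h2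
  simpa [smul_smul, inv_mul_cancel₀ (show (c : F) ≠ 0 by exact_mod_cast hc)] using h3

lemma deriv_aux (F : Type*) [Field F] [CharZero F] {A : Type*} [CommRing A] [Algebra F A]
    (D : Derivation F A A) (a : A) (n : ℕ) (hn : a ^ n = 0) :
    ∀ j, 1 ≤ j → j ≤ n → a ^ (n - j) * (D a) ^ (2 * j - 1) = 0 := by
  intro j
  induction j with
  | zero => intro h; exact absurd h (by omega)
  | succ j ih =>
    intro _ hjn
    rcases Nat.eq_zero_or_pos j with hj0 | hj1
    · subst hj0
      have hD : D (a ^ n) = 0 := by rw [hn, map_zero]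
      rw [D.leibniz_pow] at hD
      have : a ^ (n - 1) * D a = 0 := by
        apply nat_cancel F n (by omega)
        simpa [smul_eq_mul] using hD
      simpa using this
    · have hjn' : j ≤ n := by omega
      have prev := ih hj1 hjn'
      have hD : D (a ^ (n - j) * (D a) ^ (2 * j - 1)) = 0 := by rw [prev, map_zero]
      rw [D.leibniz, D.leibniz_pow, D.leibniz_pow] at hD
      have hmul : D a * (a ^ (n - j) • ((2 * j - 1) • (D a) ^ (2 * j - 1 - 1) • D (D a))
          + ((D a) ^ (2 * j - 1)) • ((n - j) • a ^ (n - j - 1) • D a)) = 0 := by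
        rw [hD, mul_zero]
      have e1 : D a * (a ^ (n - j) • ((2 * j - 1) • (D a) ^ (2 * j - 1 - 1) • D (D a))) = 0 := by
        simp only [smul_eq_mul, nsmul_eq_mul]
        have h2 : D a * D a ^ (2 * j - 1 - 1) = D a ^ (2 * j - 1) := by
          rw [← pow_succ']; congr 1; omega
        linear_combination (((2 * j - 1 : ℕ) : A) * a ^ (n - j) * D (D a)) * h2
          + (((2 * j - 1 : ℕ) : A) * D (D a)) * prev
      rw [mul_add, e1, zero_add] at hmul
      have h3 : D a ^ (2 * (j + 1) - 1) = D a ^ (2 * j - 1) * D a * D a := by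
        rw [← pow_succ, ← pow_succ]; congr 1; omega
      have key : (n - j) • (a ^ (n - j - 1) * (D a) ^ (2 * (j + 1) - 1)) = 0 := by
        rw [← hmul]
        simp only [smul_eq_mul, nsmul_eq_mul]
        linear_combination (((n - j : ℕ) : A) * a ^ (n - j - 1)) * h3
      have : a ^ (n - j - 1) * (D a) ^ (2 * (j + 1) - 1) = 0 :=
        nat_cancel F (n - j) (by omega) _ key
      simpa [Nat.sub_sub] using this

lemma deriv_nilpotent (F : Type*) [Field F] [CharZero F] {A : Type*} [CommRing A] [Algebra F A]
    (D : Derivation F A A) (a : A) (ha : IsNilpotent a) :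
    IsNilpotent (D a) := by
  obtain ⟨n, hn⟩ := ha
  rcases Nat.eq_zero_or_pos n with h0 | hpos
  · subst h0
    simp only [pow_zero] at hn
    exact ⟨1, by rw [pow_one]; calc D a = D (1 * a) := by rw [one_mul]
      _ = 0 := by rw [hn, zero_mul, map_zero]⟩
  · refine ⟨2 * n - 1, ?_⟩
    have := deriv_aux F D a n hn n hpos le_rfl
    simpa using this

/-- A simple n-Lie Poisson algebra over a field of characteristic zero
contains no nonzero nilpotent elements. -/
theorem simple_nLiePoisson_reduced
    (F : Type*) [Field F] [CharZero F] (A : Type*) [CommRing A] [Algebra F A]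
    (m : ℕ) (ω : A [⋀^Fin (m + 2)]→ₗ[F] A)
    (hJac : ∀ (x : Fin (m + 2) → A) (y : Fin (m + 1) → A),
      ω (Fin.cons (ω x) y) =
        ∑ i, ω (Function.update x i (ω (Fin.cons (x i) y))))
    (hLeib : ∀ (a b : A) (u : Fin (m + 1) → A),
      ω (Fin.cons (a * b) u) = a * ω (Fin.cons b u) + ω (Fin.cons a u) * b)
    (hSimple : ∀ I : Ideal A,
      (∀ x ∈ I, ∀ v : Fin (m + 1) → A, ω (Fin.cons x v) ∈ I) → I = ⊥ ∨ I = ⊤)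
    (a : A) (k : ℕ) (hk : 1 ≤ k) (ha : a ^ k = 0) : a = 0 := by
  -- For each v, x ↦ ω (Fin.cons x v) is a derivation.
  have hlin : ∀ v : Fin (m + 1) → A, ∃ D : Derivation F A A,
      ∀ x, D x = ω (Fin.cons x v) := by
    intro v
    refine ⟨Derivation.mk'
      { toFun := fun x => ω (Fin.cons x v)
        map_add' := by
          intro x y
          have := ω.map_update_add (Fin.cons (0 : A) v) 0 x y
          simpa [Fin.update_cons_zero] using this
        map_smul' := by
          intro c x
          have := ω.map_update_smul (Fin.cons (0 : A) v) 0 c x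
          simpa [Fin.update_cons_zero] using this }
      (fun x y => by
        simp only [LinearMap.coe_mk, AddHom.coe_mk, smul_eq_mul]
        rw [hLeib x y v]; ring),
      fun x => rfl⟩
  -- the nilradical is a Poisson ideal
  have hnil : nilradical A = ⊥ ∨ nilradical A = ⊤ := by
    apply hSimple
    intro x hx v
    obtain ⟨D, hD⟩ := hlin v
    rw [← hD]
    exact deriv_nilpotent F D x (by rwa [mem_nilradical] at hx)
  have haMem : a ∈ nilradical A := ⟨k, ha⟩
  rcases hnil with h | h
  · rw [h] at haMem; exact haMem
  · have h1 : (1 : A) ∈ nilradical A := by rw [h]; trivial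
    obtain ⟨n, hn⟩ := h1
    rw [one_pow] at hn
    calc a = a * 1 := (mul_one a).symm
      _ = 0 := by rw [hn, mul_zero]
end

section
/- Let A be a commutative associative algebra over a field of characteristic zero with no nonzero nilpotent elements, and let d : A → A be a derivation. If dᵐ = 0 for some m ≥ 1, then d = 0. -/
open Finset in
lemma iter_leibniz_aux {F A : Type*} [CommSemiring F] [CommRing A] [Algebra F A]
    (d : Derivation F A A) (n : ℕ) (x y : A) :
    (⇑d)^[n] (x * y) =
      ∑ k ∈ Finset.range (n + 1), n.choose k • ((⇑d)^[k] x * (⇑d)^[n - k] y) := by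
  induction n with
  | zero => simp
  | succ n ih =>
    have hterm : ∀ k, d (n.choose k • ((⇑d)^[k] x * (⇑d)^[n - k] y))
        = n.choose k • ((⇑d)^[k + 1] x * (⇑d)^[n - k] y)
          + n.choose k • ((⇑d)^[k] x * (⇑d)^[n - k + 1] y) := by
      intro k
      rw [map_nsmul, Derivation.leibniz, smul_eq_mul, smul_eq_mul,
        Function.iterate_succ_apply', Function.iterate_succ_apply', smul_add]
      ring_nf
    rw [Function.iterate_succ_apply', ih, map_sum]
    simp only [hterm, Finset.sum_add_distrib]
    -- f k = d^[k] x * d^[n+1-k] y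
    set f : ℕ → A := fun k => (⇑d)^[k] x * (⇑d)^[n + 1 - k] y with hf
    have e1 : ∑ k ∈ range (n + 1), n.choose k • ((⇑d)^[k + 1] x * (⇑d)^[n - k] y)
        = ∑ k ∈ range (n + 1), n.choose k • f (k + 1) := by
      refine Finset.sum_congr rfl fun k hk => ?_
      have h : n - k = n + 1 - (k + 1) := by omega
      rw [hf, h]
    have e2 : ∑ k ∈ range (n + 1), n.choose k • ((⇑d)^[k] x * (⇑d)^[n - k + 1] y)
        = ∑ k ∈ range (n + 1), n.choose k • f k := by
      refine Finset.sum_congr rfl fun k hk => ?_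
      rw [Finset.mem_range] at hk
      have h : n - k + 1 = n + 1 - k := by omega
      rw [hf, h]
    rw [e1, e2]
    rw [Finset.sum_range_succ' (fun k => (n + 1).choose k • f k) (n + 1)]
    simp only [Nat.choose_succ_succ, add_smul, Finset.sum_add_distrib, Nat.choose_zero_right,
      one_smul]
    have e3 : ∑ k ∈ range (n + 1), n.choose k • f k
        = ∑ k ∈ range (n + 1), n.choose (k + 1) • f (k + 1) + f 0 := by
      rw [Finset.sum_range_succ' (fun k => n.choose k • f k) n]
      simp only [Nat.choose_zero_right, one_smul]
      rw [Finset.sum_range_succ (fun k => n.choose (k + 1) • f (k + 1)) n]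
      simp [Nat.choose_succ_self]
    rw [e3]
    abel

/-- In a reduced commutative algebra over a field of characteristic zero,
a nilpotent derivation is zero. -/
theorem nilpotent_derivation_eq_zero_of_reduced
    (F : Type*) [Field F] [CharZero F] (A : Type*) [CommRing A] [Algebra F A]
    (hred : ∀ a : A, ∀ k : ℕ, 1 ≤ k → a ^ k = 0 → a = 0)
    (d : Derivation F A A) (m : ℕ) (hm : 1 ≤ m)
    (hnil : ∀ x : A, (⇑d)^[m] x = 0) :
    ∀ x : A, d x = 0 := by
  revert hm hnil
  induction m with
  | zero => omega
  | succ k ih =>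
    intro _ hnil x
    rcases Nat.eq_zero_or_pos k with hk | hk
    · subst hk
      simpa using hnil x
    · refine ih hk ?_ x
      intro y
      have hzero : ∀ j : ℕ, (⇑d)^[j] (0 : A) = 0 := by
        intro j
        induction j with
        | zero => rfl
        | succ i hi => rw [Function.iterate_succ_apply', hi, map_zero]
      have high : ∀ n, k + 1 ≤ n → ∀ z : A, (⇑d)^[n] z = 0 := by
        intro n hn z
        obtain ⟨j, rfl⟩ : ∃ j, n = j + (k + 1) := ⟨n - (k + 1), by omega⟩
        rw [Function.iterate_add_apply, hnil, hzero]
      set a : A := (⇑d)^[k] y with ha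
      have key := iter_leibniz_aux d (2 * k) y y
      rw [high (2 * k) (by omega) _] at key
      rw [Finset.sum_eq_single_of_mem k (Finset.mem_range.mpr (by omega))
        (fun j hj hne => by
          rcases lt_or_gt_of_ne hne with h | h
          · rw [high (2 * k - j) (by rw [Finset.mem_range] at hj; omega) y, mul_zero, smul_zero]
          · rw [high j (by omega) y, zero_mul, smul_zero])] at key
      have h2 : 2 * k - k = k := by omega
      rw [h2, ← ha] at key
      have hc : 0 < (2 * k).choose k := Nat.choose_pos (by omega)
      have hF : ((2 * k).choose k : F) • (a * a) = 0 := by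
        rw [Nat.cast_smul_eq_nsmul, ← key]
      have haa : a * a = 0 := by
        have := smul_eq_zero.mp hF
        rcases this with h | h
        · exact absurd (Nat.cast_eq_zero.mp h) (by omega)
        · exact h
      exact hred a 2 (by norm_num) (by rw [sq]; exact haa)
end

section
/- Let (A, ·, ω) be a simple n-Lie Poisson algebra over a field of characteristic zero. If elements a₂, …, aₙ ∈ A satisfy ad(a₂,…,aₙ)ᵐ = 0 for some m ≥ 1, where ad(a₂,…,aₙ)(b) = ω(b, a₂,…,aₙ), then ad(a₂,…,aₙ) = 0, i.e., ω(b, a₂,…,aₙ) = 0 for all b ∈ A. -/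
/-!
Over a field of characteristic zero a derivation maps nilpotents to nilpotents (if `x ^ n = 0`
then `(D x) ^ (2 * n) = 0`), so the nilradical is an ideal stable under every `ω (·, v)`. By
simplicity it is `⊥` or `⊤`, and in both cases the algebra is reduced. In a reduced
torsion-free algebra, `D ^ (j + 2) = 0` forces `D ^ (j + 1) = 0`, because the Leibniz formula
collapses to `0 = D ^ (2 * j + 2) (a * a) = C(2 * j + 2, j + 1) • (D ^ (j + 1) a) ^ 2`.
Descending from `k` gives `D = 0` for `D = ω (·, a)`.
-/

open Finset

namespace Derivation

variable {R A : Type*} [CommSemiring R] [CommSemiring A] [Algebra R A] (D : Derivation R A A)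

theorem iterate_leibniz (n : ℕ) (a b : A) :
    D^[n] (a * b) = ∑ ij ∈ antidiagonal n, n.choose ij.1 • (D^[ij.1] a * D^[ij.2] b) := by
  induction n with
  | zero => simp
  | succ n ih =>
    rw [sum_antidiagonal_choose_succ_nsmul (M := A) (fun i j => D^[i] a * D^[j] b) n,
      Function.iterate_succ_apply', ih, map_sum]
    simp only [map_nsmul, leibniz, smul_eq_mul, smul_add, sum_add_distrib,
      Function.iterate_succ_apply']
    congr 1
    refine sum_congr rfl fun ⟨i, j⟩ hij ↦ ?_
    rw [n.choose_symm_of_eq_add (mem_antidiagonal.1 hij).symm, mul_comm]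

theorem mul_apply_pow (a : A) (n : ℕ) : a * D (a ^ n) = n • (a ^ n * D a) := by
  cases n with
  | zero => simp
  | succ n => rw [leibniz_pow, Nat.add_sub_cancel, smul_eq_mul, pow_succ]; ring

variable [IsAddTorsionFree A]

theorem pow_mul_apply_pow_add_two_eq_zero {x : A} {s t : ℕ}
    (h : x ^ (s + 1) * D x ^ t = 0) : x ^ s * D x ^ (t + 2) = 0 := by
  have hD : D (x ^ (s + 1) * D x ^ t) * D x = 0 := by rw [h, map_zero, zero_mul]
  have h₁ : x ^ (s + 1) * D (D x ^ t) * D x = 0 := by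
    rw [mul_assoc, mul_comm (D _), mul_apply_pow, mul_smul_comm, ← mul_assoc, h, zero_mul,
      smul_zero]
  have h₂ : D x ^ t * D (x ^ (s + 1)) * D x = (s + 1) • (x ^ s * D x ^ (t + 2)) := by
    rw [leibniz_pow, Nat.add_sub_cancel]
    simp only [smul_eq_mul, nsmul_eq_mul]
    push_cast
    ring
  rw [leibniz, smul_eq_mul, smul_eq_mul, add_mul, h₁, zero_add, h₂] at hD
  exact (smul_eq_zero.mp hD).resolve_left s.succ_ne_zero

theorem isNilpotent_apply {x : A} (hx : IsNilpotent x) : IsNilpotent (D x) := by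
  obtain ⟨n, hn⟩ := hx
  have key : ∀ t ≤ n, x ^ (n - t) * D x ^ (2 * t) = 0 := by
    intro t
    induction t with
    | zero => simp [hn]
    | succ t ih =>
      intro ht
      obtain ⟨s, hs⟩ : ∃ s, n - t = s + 1 := ⟨n - t - 1, by omega⟩
      rw [show n - (t + 1) = s by omega, mul_add]
      exact D.pow_mul_apply_pow_add_two_eq_zero (hs ▸ ih (by omega))
  exact ⟨2 * n, by simpa using key n le_rfl⟩

variable [IsReduced A]

theorem iterate_succ_eq_zero_of_iterate_succ_succ_eq_zero {j : ℕ}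
    (h : ∀ a, D^[j + 2] a = 0) (a : A) : D^[j + 1] a = 0 := by
  have hvanish : ∀ i, j + 2 ≤ i → D^[i] a = 0 := fun i hi ↦ by
    obtain ⟨p, rfl⟩ := Nat.exists_eq_add_of_le' hi
    rw [Function.iterate_add_apply, h, iterate_map_zero]
  have hsq : D^[2 * (j + 1)] (a * a) = 0 := by
    rw [show 2 * (j + 1) = j + (j + 2) by omega, Function.iterate_add_apply, h, iterate_map_zero]
  rw [iterate_leibniz, sum_eq_single_of_mem (j + 1, j + 1) (by simp [two_mul])] at hsq
  · have hchoose : (2 * (j + 1)).choose (j + 1) ≠ 0 := (Nat.choose_pos (by omega)).ne'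
    have hsq' : D^[j + 1] a * D^[j + 1] a = 0 := (smul_eq_zero.mp hsq).resolve_left hchoose
    exact IsReduced.eq_zero _ ⟨2, pow_two (D^[j + 1] a) ▸ hsq'⟩
  · rintro ⟨i, i'⟩ hii' hne
    rw [HasAntidiagonal.mem_antidiagonal] at hii'
    rw [ne_eq, Prod.ext_iff, not_and_or] at hne
    rcases le_or_gt (j + 2) i with hi | hi
    · rw [hvanish i hi, zero_mul, smul_zero]
    · rw [hvanish i' (by omega), mul_zero, smul_zero]

theorem eq_zero_of_iterate_eq_zero {k : ℕ} (h : ∀ a, D^[k] a = 0) : D = 0 := by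
  induction k with
  | zero => ext a; exact h (D a)
  | succ k ih =>
    cases k with
    | zero => ext a; exact h a
    | succ j => exact ih (D.iterate_succ_eq_zero_of_iterate_succ_succ_eq_zero h)

end Derivation

namespace AlternatingMap

variable {F A : Type*} [CommSemiring F] [CommRing A] [Algebra F A] {n : ℕ}

def adDerivation (ω : A [⋀^Fin (n + 1)]→ₗ[F] A)
    (hLeib : ∀ (a b : A) (u : Fin n → A),
      ω (Fin.cons (a * b) u) = a * ω (Fin.cons b u) + ω (Fin.cons a u) * b)
    (v : Fin n → A) : Derivation F A A :=
  Derivation.mk'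
    { toFun x := ω (Fin.cons x v)
      map_add' x y := DFunLike.congr_fun (map_add ω.curryLeft x y) v
      map_smul' c x := DFunLike.congr_fun (map_smul ω.curryLeft c x) v }
    fun a b ↦ by rw [smul_eq_mul, smul_eq_mul, mul_comm b]; exact hLeib a b v

end AlternatingMap

theorem simple_nLiePoisson_ad_nilpotent_eq_zero_general
    (F : Type*) [Field F] [CharZero F] (A : Type*) [CommRing A] [Algebra F A]
    (m : ℕ) (ω : A [⋀^Fin (m + 2)]→ₗ[F] A)
    (hLeib : ∀ (a b : A) (u : Fin (m + 1) → A),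
      ω (Fin.cons (a * b) u) = a * ω (Fin.cons b u) + ω (Fin.cons a u) * b)
    (hSimple : ∀ I : Ideal A,
      (∀ x ∈ I, ∀ v : Fin (m + 1) → A, ω (Fin.cons x v) ∈ I) → I = ⊥ ∨ I = ⊤)
    (a : Fin (m + 1) → A) (k : ℕ)
    (hnil : ∀ b : A, (fun b => ω (Fin.cons b a))^[k] b = 0) :
    ∀ b : A, ω (Fin.cons b a) = 0 := by
  have : IsAddTorsionFree A := .of_isTorsionFree F A
  have : IsReduced A := by
    rcases hSimple (nilradical A) fun x hx v ↦ (ω.adDerivation hLeib v).isNilpotent_apply hx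
      with hbot | htop
    · exact nilradical_eq_bot_iff.mp hbot
    · obtain ⟨n, hn⟩ := mem_nilradical.mp ((Ideal.eq_top_iff_one _).mp htop)
      have : Subsingleton A := subsingleton_of_zero_eq_one ((one_pow n).symm.trans hn).symm
      infer_instance
  exact DFunLike.congr_fun ((ω.adDerivation hLeib a).eq_zero_of_iterate_eq_zero hnil)

/-- In a simple n-Lie Poisson algebra over a field of characteristic zero,
if ad(a₂,…,aₙ)ᵐ = 0 for some m ≥ 1 then ad(a₂,…,aₙ) = 0. -/
theorem simple_nLiePoisson_ad_nilpotent_eq_zero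
    (F : Type*) [Field F] [CharZero F] (A : Type*) [CommRing A] [Algebra F A]
    (m : ℕ) (ω : A [⋀^Fin (m + 2)]→ₗ[F] A)
    (hJac : ∀ (x : Fin (m + 2) → A) (y : Fin (m + 1) → A),
      ω (Fin.cons (ω x) y) =
        ∑ i, ω (Function.update x i (ω (Fin.cons (x i) y))))
    (hLeib : ∀ (a b : A) (u : Fin (m + 1) → A),
      ω (Fin.cons (a * b) u) = a * ω (Fin.cons b u) + ω (Fin.cons a u) * b)
    (hSimple : ∀ I : Ideal A,
      (∀ x ∈ I, ∀ v : Fin (m + 1) → A, ω (Fin.cons x v) ∈ I) → I = ⊥ ∨ I = ⊤)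
    (a : Fin (m + 1) → A) (k : ℕ) (hk : 1 ≤ k)
    (hnil : ∀ b : A, (fun b => ω (Fin.cons b a))^[k] b = 0) :
    ∀ b : A, ω (Fin.cons b a) = 0 :=
  simple_nLiePoisson_ad_nilpotent_eq_zero_general F A m ω hLeib hSimple a k hnil
end

section
/- Let (A, ·, ω) be a simple n-Lie Poisson algebra over a field of characteristic zero with 1 ∈ A, and let U be an abelian ideal of the n-Lie algebra A⁽¹⁾ = ω(A, A, …, A). Then ω(A, A⁽¹⁾, …, A⁽¹⁾, U) = 0, i.e., ω(a, x₂, …, xₙ₋₁, u) = 0 for all a ∈ A, x₂,…,xₙ₋₁ ∈ A⁽¹⁾, u ∈ U. -/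
/-- The derived ideal A⁽¹⁾ = span of all brackets ω(A,…,A). -/
def bracketSpan (F : Type*) [Field F] (A : Type*) [CommRing A] [Algebra F A]
    {m : ℕ} (ω : A [⋀^Fin (m + 2)]→ₗ[F] A) : Submodule F A :=
  Submodule.span F (Set.range ⇑ω)

private lemma natCancelAux (F : Type*) [Field F] [CharZero F] {A : Type*} [CommRing A]
    [Algebra F A] (n : ℕ) (hn : n ≠ 0) (z : A) (h : (n : A) * z = 0) : z = 0 := by
  have h1 : (n : F) • z = 0 := by
    rw [Nat.cast_smul_eq_nsmul, nsmul_eq_mul, h]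
  rcases smul_eq_zero.mp h1 with h2 | h2
  · exact absurd (Nat.cast_eq_zero.mp h2) hn
  · exact h2

private lemma derivPowAux {A : Type*} [CommRing A] (D : A → A)
    (hL : ∀ a b, D (a * b) = a * D b + D a * b) (z : A) :
    ∀ n : ℕ, D (z ^ (n + 1)) = ((n : A) + 1) * (z ^ n * D z) := by
  intro n
  induction n with
  | zero => simp
  | succ n ih =>
    rw [pow_succ, hL, ih]
    push_cast
    ring

private lemma derivNilpotentAux (F : Type*) [Field F] [CharZero F] {A : Type*} [CommRing A]
    [Algebra F A] (D : A → A) (hD0 : D 0 = 0)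
    (hL : ∀ a b, D (a * b) = a * D b + D a * b) (x : A) (hx : IsNilpotent x) :
    IsNilpotent (D x) := by
  obtain ⟨k, hk⟩ := hx
  cases k with
  | zero =>
    have h1 : (1 : A) = 0 := by simpa using hk
    refine ⟨1, ?_⟩
    rw [pow_one, ← mul_one (D x), h1, mul_zero]
  | succ k =>
    have key : ∀ i p : ℕ, p + i + 1 = k + 1 → x ^ p * (D x) ^ (2 * i + 1) = 0 := by
      intro i
      induction i with
      | zero =>
        intro p hp
        have hpk : p = k := by omega
        subst hpk
        have h0 : D (x ^ (p + 1)) = 0 := by rw [hk, hD0]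
        rw [derivPowAux D hL x p] at h0
        have h1 : ((p + 1 : ℕ) : A) * (x ^ p * D x) = 0 := by
          push_cast
          linear_combination h0
        have h2 := natCancelAux F (p + 1) (Nat.succ_ne_zero p) _ h1
        simpa using h2
      | succ i ih =>
        intro p hp
        have E : x ^ (p + 1) * (D x) ^ (2 * i + 1) = 0 := ih (p + 1) (by omega)
        have hDE : D (x ^ (p + 1) * (D x) ^ (2 * i + 1)) = 0 := by rw [E, hD0]
        rw [hL, derivPowAux D hL (D x) (2 * i), derivPowAux D hL x p] at hDE
        have hmul := congrArg (fun t => t * D x) hDE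
        simp only [zero_mul] at hmul
        have hgoal : ((p + 1 : ℕ) : A) * (x ^ p * (D x) ^ (2 * (i + 1) + 1)) = 0 := by
          push_cast at hmul ⊢
          linear_combination hmul - (((2 : A) * (i : A) + 1) * D (D x)) * E
        exact natCancelAux F (p + 1) (Nat.succ_ne_zero p) _ hgoal
    have hfinal := key k 0 (by omega)
    exact ⟨2 * k + 1, by simpa using hfinal⟩

/-- If U is an abelian ideal of A⁽¹⁾ in a simple n-Lie Poisson algebra
over a field of characteristic 0 (with 1 ∈ A), then ω(A, A⁽¹⁾,…,A⁽¹⁾, U) = 0. -/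
theorem simple_nLiePoisson_abelian_ideal_middle
    (F : Type*) [Field F] [CharZero F] (A : Type*) [CommRing A] [Algebra F A]
    (m : ℕ) (ω : A [⋀^Fin (m + 2)]→ₗ[F] A)
    (hJac : ∀ (x : Fin (m + 2) → A) (y : Fin (m + 1) → A),
      ω (Fin.cons (ω x) y) =
        ∑ i, ω (Function.update x i (ω (Fin.cons (x i) y))))
    (hLeib : ∀ (a b : A) (u : Fin (m + 1) → A),
      ω (Fin.cons (a * b) u) = a * ω (Fin.cons b u) + ω (Fin.cons a u) * b)
    (hSimple : ∀ I : Ideal A,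
      (∀ x ∈ I, ∀ v : Fin (m + 1) → A, ω (Fin.cons x v) ∈ I) → I = ⊥ ∨ I = ⊤)
    (U : Submodule F A) (hUle : U ≤ bracketSpan F A ω)
    (hUideal : ∀ u ∈ U, ∀ v : Fin (m + 1) → A,
      (∀ i, v i ∈ bracketSpan F A ω) → ω (Fin.cons u v) ∈ U)
    (hUab : ∀ v : Fin (m + 2) → A, (∀ i, v i ∈ U) → ω v = 0) :
    ∀ a : A, ∀ x : Fin m → A, (∀ i, x i ∈ bracketSpan F A ω) →
      ∀ u ∈ U, ω (Fin.cons a (Fin.snoc x u)) = 0 := by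
  classical
  -- Step 1: the nilradical is a Poisson ideal, hence ⊥ or ⊤.
  have hclos : ∀ z ∈ nilradical A, ∀ v : Fin (m + 1) → A,
      ω (Fin.cons z v) ∈ nilradical A := by
    intro z hz v
    refine mem_nilradical.mpr ?_
    have h0 : (fun b => ω (Fin.cons b v)) 0 = 0 :=
      ω.map_coord_zero 0 (by simp)
    exact derivNilpotentAux F (fun b => ω (Fin.cons b v)) h0
      (fun a b => hLeib a b v) z (mem_nilradical.mp hz)
  rcases hSimple (nilradical A) hclos with hbot | htop
  swap
  · -- nilradical = ⊤ : the ring is trivial.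
    have h1 : IsNilpotent (1 : A) := mem_nilradical.mp (htop ▸ Submodule.mem_top)
    obtain ⟨k, hk⟩ := h1
    rw [one_pow] at hk
    intro a x hx u hu
    calc ω (Fin.cons a (Fin.snoc x u))
        = ω (Fin.cons a (Fin.snoc x u)) * 1 := (mul_one _).symm
      _ = 0 := by rw [hk, mul_zero]
  · -- A is reduced.
    have hred : ∀ z : A, IsNilpotent z → z = 0 := by
      intro z hz
      have hmem : z ∈ nilradical A := mem_nilradical.mpr hz
      rw [hbot] at hmem
      simpa using hmem
    -- Leibniz rule in an arbitrary position.
    have hLB : ∀ (w : Fin (m + 2) → A) (i₀ : Fin (m + 2)) (a b : A),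
        ω (Function.update w i₀ (a * b))
          = a * ω (Function.update w i₀ b) + ω (Function.update w i₀ a) * b := by
      have base : ∀ (w : Fin (m + 2) → A) (a b : A),
          ω (Function.update w 0 (a * b))
            = a * ω (Function.update w 0 b) + ω (Function.update w 0 a) * b := by
        intro w a b
        have hrw : ∀ z : A, Function.update w 0 z = Fin.cons z (Fin.tail w) := by
          intro z
          conv_lhs => rw [← Fin.cons_self_tail w]
          rw [Fin.update_cons_zero]
        simp only [hrw]
        exact hLeib a b (Fin.tail w)
      intro w i₀ a b
      rcases eq_or_ne i₀ 0 with h | h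
      · subst h; exact base w a b
      · have hcomp : ∀ z : A,
            Function.update w i₀ z ∘ (Equiv.swap (0 : Fin (m + 2)) i₀)
              = Function.update (w ∘ (Equiv.swap (0 : Fin (m + 2)) i₀)) 0 z := by
          intro z; funext k
          rcases eq_or_ne k 0 with hk | hk
          · subst hk
            simp only [Function.comp_apply]
            rw [Equiv.swap_apply_left, Function.update_self, Function.update_self]
          · have h1 : Equiv.swap (0 : Fin (m + 2)) i₀ k ≠ i₀ := by
              intro hc
              exact hk ((Equiv.swap (0 : Fin (m + 2)) i₀).injective
                (by rw [hc, Equiv.swap_apply_left]))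
            simp only [Function.comp_apply, Function.update_of_ne h1,
              Function.update_of_ne hk]
        have hswap : ∀ z : A, ω (Function.update w i₀ z)
            = - ω (Function.update (w ∘ (Equiv.swap (0 : Fin (m + 2)) i₀)) 0 z) := by
          intro z
          have h1 : ω (Function.update w i₀ z ∘ (Equiv.swap (0 : Fin (m + 2)) i₀))
              = - ω (Function.update w i₀ z) := ω.map_swap _ (Ne.symm h)
          rw [hcomp z] at h1
          rw [h1, neg_neg]
        rw [hswap (a * b), base, hswap a, hswap b]
        ring
    -- U-membership in an arbitrary position.
    have hUI : ∀ (w : Fin (m + 2) → A) (j₀ : Fin (m + 2)), w j₀ ∈ U →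
        (∀ i, i ≠ j₀ → w i ∈ bracketSpan F A ω) → ω w ∈ U := by
      have base : ∀ (w : Fin (m + 2) → A), w 0 ∈ U →
          (∀ i, i ≠ 0 → w i ∈ bracketSpan F A ω) → ω w ∈ U := by
        intro w h0 hrest
        have h1 : ω w = ω (Fin.cons (w 0) (Fin.tail w)) := by
          rw [Fin.cons_self_tail]
        rw [h1]
        exact hUideal (w 0) h0 (Fin.tail w)
          (fun i => hrest i.succ (Fin.succ_ne_zero i))
      intro w j₀ hj hrest
      rcases eq_or_ne j₀ 0 with h | h
      · subst h; exact base w hj hrest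
      · have hmem : ω (w ∘ (Equiv.swap (0 : Fin (m + 2)) j₀)) ∈ U := by
          apply base
          · show w (Equiv.swap (0 : Fin (m + 2)) j₀ 0) ∈ U
            rw [Equiv.swap_apply_left]
            exact hj
          · intro i hi
            have h1 : Equiv.swap (0 : Fin (m + 2)) j₀ i ≠ j₀ := by
              intro hc
              exact hi ((Equiv.swap (0 : Fin (m + 2)) j₀).injective
                (by rw [hc, Equiv.swap_apply_left]))
            exact hrest _ h1
        have hsw : ω (w ∘ (Equiv.swap (0 : Fin (m + 2)) j₀)) = - ω w :=
          ω.map_swap _ (Ne.symm h)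
        have h2 : ω w = - ω (w ∘ (Equiv.swap (0 : Fin (m + 2)) j₀)) := by
          rw [hsw, neg_neg]
        rw [h2]
        exact U.neg_mem hmem
    -- The key derivation argument.
    have main : ∀ (v : Fin (m + 2) → A) (i₀ j₀ : Fin (m + 2)), j₀ ≠ i₀ → v j₀ ∈ U →
        (∀ i, i ≠ i₀ → v i ∈ bracketSpan F A ω) →
        (∀ u' ∈ U, ω (Function.update v i₀ u') = 0) → ω v = 0 := by
      intro v i₀ j₀ hj₀i₀ hj₀U hvL hDU
      set D : A → A := fun b => ω (Function.update v i₀ b) with hDdef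
      have hadd : ∀ z z' : A, D (z + z') = D z + D z' := fun z z' =>
        ω.map_update_add v i₀ z z'
      have hD0 : D 0 = 0 := ω.map_coord_zero i₀ (by simp)
      have hLb : ∀ a b : A, D (a * b) = a * D b + D a * b := fun a b => hLB v i₀ a b
      have hmemL : ∀ b : A, D b ∈ bracketSpan F A ω := fun b =>
        Submodule.subset_span ⟨_, rfl⟩
      have hLU : ∀ ℓ, ℓ ∈ bracketSpan F A ω → D ℓ ∈ U := by
        intro ℓ hℓ
        refine hUI (Function.update v i₀ ℓ) j₀ ?_ ?_
        · rw [Function.update_of_ne hj₀i₀]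
          exact hj₀U
        · intro i hi
          rcases eq_or_ne i i₀ with h | h
          · subst h; rw [Function.update_self]; exact hℓ
          · rw [Function.update_of_ne h]; exact hvL i h
      have hD3 : ∀ b : A, D (D (D b)) = 0 := fun b => hDU _ (hLU (D b) (hmemL b))
      have hcd : ∀ b : A, D b * D (D b) = 0 := by
        intro b
        have e1 := hD3 (b * b)
        rw [hLb b b, hadd, hLb, hLb, hadd, hadd, hadd, hLb, hLb, hLb, hD3 b] at e1
        have h6 : ((6 : ℕ) : A) * (D b * D (D b)) = 0 := by
          push_cast
          linear_combination e1
        exact natCancelAux F 6 (by norm_num) _ h6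
      have hdd : ∀ b : A, D (D b) = 0 := by
        intro b
        have h := congrArg D (hcd b)
        rw [hD0, hLb, hD3 b] at h
        have hsq : D (D b) * D (D b) = 0 := by linear_combination h
        exact hred _ ⟨2, by rw [pow_two]; exact hsq⟩
      have hb : ∀ b : A, D b = 0 := by
        intro b
        have e2 := hdd (b * b)
        rw [hLb b b, hadd, hLb, hLb, hdd b] at e2
        have h2 : ((2 : ℕ) : A) * (D b * D b) = 0 := by
          push_cast
          linear_combination e2
        have hsq : D b * D b = 0 := natCancelAux F 2 (by norm_num) _ h2
        exact hred _ ⟨2, by rw [pow_two]; exact hsq⟩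
      calc ω v = ω (Function.update v i₀ (v i₀)) := by rw [Function.update_eq_self]
        _ = D (v i₀) := rfl
        _ = 0 := hb (v i₀)
    -- The induction over the number of slots not constrained to U.
    have claim : ∀ j : ℕ, j ≤ m →
        ∀ (v : Fin (m + 2) → A) (i₀ : Fin (m + 2)) (S : Finset (Fin (m + 2))),
          i₀ ∉ S → m + 1 ≤ S.card + j → (∀ i ∈ S, v i ∈ U) →
          (∀ i, i ≠ i₀ → v i ∈ bracketSpan F A ω) → ω v = 0 := by
      intro j
      induction j with
      | zero =>
        intro _ v i₀ S hiS hcard hSU hvL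
        have hsub : S ⊆ Finset.univ.erase i₀ := fun i hi =>
          Finset.mem_erase.mpr ⟨fun he => hiS (by rw [← he]; exact hi), Finset.mem_univ i⟩
        have hcarde : (Finset.univ.erase i₀).card = m + 1 := by
          rw [Finset.card_erase_of_mem (Finset.mem_univ i₀), Finset.card_univ,
            Fintype.card_fin]
          omega
        have hSeq : S = Finset.univ.erase i₀ :=
          Finset.eq_of_subset_of_card_le hsub (by omega)
        have hne : S.Nonempty := Finset.card_pos.mp (by omega)
        obtain ⟨j₀, hj₀S⟩ := hne
        refine main v i₀ j₀ (fun he => hiS (by rw [← he]; exact hj₀S)) (hSU j₀ hj₀S) hvL ?_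
        intro u' hu'
        apply hUab
        intro i
        rcases eq_or_ne i i₀ with h | h
        · subst h; rw [Function.update_self]; exact hu'
        · rw [Function.update_of_ne h]
          exact hSU i (hSeq ▸ Finset.mem_erase.mpr ⟨h, Finset.mem_univ i⟩)
      | succ j ih =>
        intro hj v i₀ S hiS hcard hSU hvL
        have hne : S.Nonempty := Finset.card_pos.mp (by omega)
        obtain ⟨j₀, hj₀S⟩ := hne
        refine main v i₀ j₀ (fun he => hiS (by rw [← he]; exact hj₀S)) (hSU j₀ hj₀S) hvL ?_
        intro u' hu'
        by_cases hfull : ∀ i : Fin (m + 2), i ∈ insert i₀ S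
        · apply hUab
          intro i
          rcases eq_or_ne i i₀ with h | h
          · subst h; rw [Function.update_self]; exact hu'
          · rw [Function.update_of_ne h]
            rcases Finset.mem_insert.mp (hfull i) with h' | h'
            · exact absurd h' h
            · exact hSU i h'
        · push_neg at hfull
          obtain ⟨i₀', hi₀'⟩ := hfull
          refine ih (by omega) (Function.update v i₀ u') i₀' (insert i₀ S) hi₀' ?_ ?_ ?_
          · rw [Finset.card_insert_of_notMem hiS]; omega
          · intro i hi
            rcases Finset.mem_insert.mp hi with h | h
            · subst h; rw [Function.update_self]; exact hu'
            · rw [Function.update_of_ne (fun he => hiS (by rw [← he]; exact h))]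
              exact hSU i h
          · intro i hi'
            rcases eq_or_ne i i₀ with h | h
            · subst h; rw [Function.update_self]; exact hUle hu'
            · rw [Function.update_of_ne h]
              exact hvL i h
    -- Conclusion.
    intro a x hx u hu
    refine claim m le_rfl (Fin.cons a (Fin.snoc x u)) 0 {Fin.last (m + 1)} ?_ ?_ ?_ ?_
    · intro hmem
      rw [Finset.mem_singleton] at hmem
      have : (0 : Fin (m + 2)).val = (Fin.last (m + 1)).val := by rw [hmem]
      simp [Fin.val_last] at this
    · rw [Finset.card_singleton]; omega
    · intro i hi
      rw [Finset.mem_singleton] at hi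
      subst hi
      rw [show (Fin.last (m + 1)) = (Fin.last m).succ from (Fin.succ_last m).symm,
        Fin.cons_succ, Fin.snoc_last]
      exact hu
    · intro i hi
      induction i using Fin.cases with
      | zero => exact absurd rfl hi
      | succ k =>
        rw [Fin.cons_succ]
        induction k using Fin.lastCases with
        | last => rw [Fin.snoc_last]; exact hUle hu
        | cast k' => rw [Fin.snoc_castSucc]; exact hx k'
end

section
/- Let (A, ·, ω) be a simple n-Lie Poisson algebra over a field of characteristic zero with 1 ∈ A, and let U be an abelian ideal of the n-Lie algebra A⁽¹⁾ = ω(A, …, A). Then ω(A, …, A, U) = 0, i.e., ω(a₁, …, aₙ₋₁, u) = 0 for all a₁, …, aₙ₋₁ ∈ A and u ∈ U; in particular U is contained in the center of the n-Lie algebra (A, ω). -/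
/-- If U is an abelian ideal of A⁽¹⁾ in a simple n-Lie Poisson algebra
over a field of characteristic 0 (with 1 ∈ A), then ω(A,…,A, U) = 0, i.e. U is
contained in the center of the n-Lie algebra (A, ω). -/
theorem simple_nLiePoisson_abelian_ideal_central
    (F : Type*) [Field F] [CharZero F] (A : Type*) [CommRing A] [Algebra F A]
    (m : ℕ) (ω : A [⋀^Fin (m + 2)]→ₗ[F] A)
    (hJac : ∀ (x : Fin (m + 2) → A) (y : Fin (m + 1) → A),
      ω (Fin.cons (ω x) y) =
        ∑ i, ω (Function.update x i (ω (Fin.cons (x i) y))))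
    (hLeib : ∀ (a b : A) (u : Fin (m + 1) → A),
      ω (Fin.cons (a * b) u) = a * ω (Fin.cons b u) + ω (Fin.cons a u) * b)
    (hSimple : ∀ I : Ideal A,
      (∀ x ∈ I, ∀ v : Fin (m + 1) → A, ω (Fin.cons x v) ∈ I) → I = ⊥ ∨ I = ⊤)
    (U : Submodule F A) (hUle : U ≤ bracketSpan F A ω)
    (hUideal : ∀ u ∈ U, ∀ v : Fin (m + 1) → A,
      (∀ i, v i ∈ bracketSpan F A ω) → ω (Fin.cons u v) ∈ U)
    (hUab : ∀ v : Fin (m + 2) → A, (∀ i, v i ∈ U) → ω v = 0) :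
    ∀ a : Fin (m + 1) → A, ∀ u ∈ U, ω (Fin.snoc a u) = 0 := by
  classical
  set W := bracketSpan F A ω with hWdef
  have hmemW : ∀ z : Fin (m + 2) → A, ω z ∈ W :=
    fun z => Submodule.subset_span (Set.mem_range_self z)
  -- cancellation of nonzero natural scalars
  have cancel : ∀ q : ℕ, q ≠ 0 → ∀ z : A, (q : A) * z = 0 → z = 0 := by
    intro q hq z h
    have h1 : (q : F) • z = 0 := by
      rw [Algebra.smul_def, map_natCast]; exact h
    have h2 : ((q : F)⁻¹ * (q : F)) • z = 0 := by rw [mul_smul, h1, smul_zero]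
    rwa [inv_mul_cancel₀ (Nat.cast_ne_zero.mpr hq), one_smul] at h2
  -- additivity in the first slot
  have δadd : ∀ (v : Fin (m + 1) → A) (a b : A),
      ω (Fin.cons (a + b) v) = ω (Fin.cons a v) + ω (Fin.cons b v) := by
    intro v a b
    simpa using ω.toMultilinearMap.cons_add v a b
  have δzero : ∀ v : Fin (m + 1) → A, ω (Fin.cons 0 v) = 0 := by
    intro v
    have h := hLeib 0 0 v
    simpa using h
  -- swapping the head with slot i of the tail
  have swap01 : ∀ (x : A) (v : Fin (m + 1) → A) (i : Fin (m + 1)),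
      ω (Fin.cons x v) = - ω (Fin.cons (v i) (Function.update v i x)) := by
    intro x v i
    have h : (Fin.cons (v i) (Function.update v i x) : Fin (m + 2) → A)
        = (Fin.cons x v : Fin (m + 2) → A) ∘ Equiv.swap 0 i.succ := by
      funext j
      rcases Fin.eq_zero_or_eq_succ j with rfl | ⟨j', rfl⟩
      · simp [Equiv.swap_apply_left]
      · by_cases hj : j' = i
        · subst hj
          simp [Equiv.swap_apply_right]
        · rw [Function.comp_apply,
            Equiv.swap_apply_of_ne_of_ne (Fin.succ_ne_zero j')
              (fun h => hj (Fin.succ_injective _ h))]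
          simp [Function.update_of_ne hj]
    rw [h, AlternatingMap.map_swap ω _ (Ne.symm (Fin.succ_ne_zero i)), neg_neg]
  -- power rule
  have dpow : ∀ (v : Fin (m + 1) → A) (p : ℕ) (y : A),
      ω (Fin.cons (y ^ (p + 1)) v) = ((p : A) + 1) * (y ^ p * ω (Fin.cons y v)) := by
    intro v p
    induction p with
    | zero => intro y; simp
    | succ p ih =>
      intro y
      rw [pow_succ, hLeib, ih y]
      push_cast
      ring
  -- derivations preserve nilpotency
  have δnil : ∀ (v : Fin (m + 1) → A) (x : A), IsNilpotent x →
      IsNilpotent (ω (Fin.cons x v)) := by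
    intro v x hx
    obtain ⟨n, hn⟩ := hx
    have key : ∀ k : ℕ, x ^ (n - k) * ω (Fin.cons x v) ^ (2 * k + 1) = 0 := by
      intro k
      induction k with
      | zero => simp [hn]
      | succ k ih =>
        by_cases hnk : k + 1 ≤ n
        · have hj : n - k = (n - (k + 1)) + 1 := by omega
          rw [hj] at ih
          set j := n - (k + 1) with hjdef
          have e0 : ω (Fin.cons (x ^ (j + 1) * ω (Fin.cons x v) ^ (2 * k + 1)) v) = 0 := by
            rw [ih]; exact δzero v
          rw [hLeib, dpow v (2 * k) _, dpow v j x] at e0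
          refine cancel (j + 1) (Nat.succ_ne_zero j) _ ?_
          push_cast at e0 ⊢
          linear_combination ω (Fin.cons x v) * e0
            - (2 * (k : A) + 1) * ω (Fin.cons (ω (Fin.cons x v)) v) * ih
        · have h0 : n - k = 0 := by omega
          have h0' : n - (k + 1) = 0 := by omega
          rw [h0] at ih
          rw [h0']
          have h2 : 2 * (k + 1) + 1 = (2 * k + 1) + 2 := by ring
          rw [h2, pow_add]
          simp only [pow_zero, one_mul] at ih ⊢
          rw [ih, zero_mul]
    refine ⟨2 * n + 1, ?_⟩
    have h := key n
    simpa [Nat.sub_self] using h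
  -- simplicity: A is reduced (or trivial)
  rcases hSimple (nilradical A)
      (fun x hx v => mem_nilradical.mpr (δnil v x (mem_nilradical.mp hx))) with hbot | htop
  swap
  · have h1 : IsNilpotent (1 : A) := mem_nilradical.mp (by rw [htop]; exact Submodule.mem_top)
    obtain ⟨n, hn⟩ := h1
    rw [one_pow] at hn
    intro a u hu
    calc ω (Fin.snoc a u) = ω (Fin.snoc a u) * 1 := (mul_one _).symm
      _ = 0 := by rw [hn, mul_zero]
  have hred : ∀ x : A, IsNilpotent x → x = 0 := by
    intro x hx
    have h : x ∈ nilradical A := mem_nilradical.mpr hx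
    rwa [hbot, Ideal.mem_bot] at h
  -- square trick : if δ kills W then δ = 0
  have sqz : ∀ v : Fin (m + 1) → A, (∀ w ∈ W, ω (Fin.cons w v) = 0) →
      ∀ x : A, ω (Fin.cons x v) = 0 := by
    intro v h2 x
    have hdd : ∀ y : A, ω (Fin.cons (ω (Fin.cons y v)) v) = 0 :=
      fun y => h2 _ (hmemW _)
    have h0 : ω (Fin.cons (ω (Fin.cons (x * x) v)) v) = 0 := hdd _
    simp only [hLeib, δadd] at h0
    rw [hdd x] at h0
    have h2' : ((2 : ℕ) : A) * (ω (Fin.cons x v) * ω (Fin.cons x v)) = 0 := by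
      push_cast
      linear_combination h0
    have hsq := cancel 2 (by norm_num) _ h2'
    exact hred _ ⟨2, by rw [pow_two]; exact hsq⟩
  -- cube trick : if δ maps W into U and kills U then δ = 0
  have cubez : ∀ v : Fin (m + 1) → A, (∀ w ∈ W, ω (Fin.cons w v) ∈ U) →
      (∀ u' ∈ U, ω (Fin.cons u' v) = 0) → ∀ x : A, ω (Fin.cons x v) = 0 := by
    intro v h2 h3 x
    have hddd : ∀ y : A,
        ω (Fin.cons (ω (Fin.cons (ω (Fin.cons y v)) v)) v) = 0 :=
      fun y => h3 _ (h2 _ (hmemW _))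
    have h0 : ω (Fin.cons (ω (Fin.cons (ω (Fin.cons (x * x) v)) v)) v) = 0 := hddd _
    simp only [hLeib, δadd] at h0
    rw [hddd x] at h0
    have t1 : ω (Fin.cons x v) * ω (Fin.cons (ω (Fin.cons x v)) v) = 0 := by
      refine cancel 6 (by norm_num) _ ?_
      push_cast
      linear_combination h0
    have h1 : ω (Fin.cons (ω (Fin.cons (ω (Fin.cons (x * (x * x)) v)) v)) v) = 0 := hddd _
    simp only [hLeib, δadd] at h1
    rw [hddd x] at h1
    have h6 : ((6 : ℕ) : A) *
        (ω (Fin.cons x v) * ω (Fin.cons x v) * ω (Fin.cons x v)) = 0 := by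
      push_cast
      linear_combination h1 - 18 * x * t1
    have hc := cancel 6 (by norm_num) _ h6
    exact hred _ ⟨3, by rw [pow_succ, pow_two]; exact hc⟩
  -- Phase R : all tail slots in W, slots from index t on in U
  have Rstat : ∀ t : ℕ, t ≤ m → ∀ (x : A) (v : Fin (m + 1) → A),
      (∀ i, v i ∈ W) → (∀ i : Fin (m + 1), t ≤ (i : ℕ) → v i ∈ U) →
      ω (Fin.cons x v) = 0 := by
    intro t
    induction t with
    | zero =>
      intro _ x v hvW hvU
      refine cubez v ?_ ?_ x
      · intro w hw
        rw [swap01 w v (Fin.last m)]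
        refine Submodule.neg_mem _ (hUideal _ (hvU (Fin.last m) (Nat.zero_le _)) _ ?_)
        intro i
        rcases eq_or_ne i (Fin.last m) with rfl | hne
        · rw [Function.update_self]; exact hw
        · rw [Function.update_of_ne hne]; exact hvW i
      · intro u' hu'
        refine hUab _ ?_
        intro i
        refine Fin.cases ?_ ?_ i
        · simpa using hu'
        · intro j; simpa using hvU j (Nat.zero_le _)
    | succ t ih =>
      intro ht x v hvW hvU
      refine cubez v ?_ ?_ x
      · intro w hw
        rw [swap01 w v (Fin.last m)]
        refine Submodule.neg_mem _ (hUideal _ (hvU (Fin.last m) (by simpa using ht)) _ ?_)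
        intro i
        rcases eq_or_ne i (Fin.last m) with rfl | hne
        · rw [Function.update_self]; exact hw
        · rw [Function.update_of_ne hne]; exact hvW i
      · intro u' hu'
        have htm : t < m + 1 := by omega
        rw [swap01 u' v ⟨t, htm⟩]
        have hW' : ∀ i, Function.update v ⟨t, htm⟩ u' i ∈ W := by
          intro i
          rcases eq_or_ne i ⟨t, htm⟩ with rfl | hne
          · rw [Function.update_self]; exact hUle hu'
          · rw [Function.update_of_ne hne]; exact hvW i
        have hU' : ∀ i : Fin (m + 1), t ≤ (i : ℕ) →
            Function.update v ⟨t, htm⟩ u' i ∈ U := by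
          intro i hi
          rcases eq_or_ne i ⟨t, htm⟩ with rfl | hne
          · rw [Function.update_self]; exact hu'
          · rw [Function.update_of_ne hne]
            refine hvU i ?_
            have hvi : (i : ℕ) ≠ t := fun h => hne (Fin.ext h)
            omega
        rw [ih (by omega) (v ⟨t, htm⟩) _ hW' hU', neg_zero]
  -- Phase S : slots from index k on in W, last slot in U
  have Sstat : ∀ k : ℕ, k ≤ m → ∀ (x : A) (v : Fin (m + 1) → A),
      (∀ i : Fin (m + 1), k ≤ (i : ℕ) → v i ∈ W) → v (Fin.last m) ∈ U →
      ω (Fin.cons x v) = 0 := by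
    intro k
    induction k with
    | zero =>
      intro _ x v hvW hvU
      refine Rstat m le_rfl x v (fun i => hvW i (Nat.zero_le _)) ?_
      intro i hi
      have hil : i = Fin.last m := Fin.ext (le_antisymm (Nat.lt_succ_iff.mp i.isLt) hi)
      rw [hil]; exact hvU
    | succ k ih =>
      intro hk x v hvW hlast
      refine sqz v ?_ x
      intro w hw
      have hkm : k < m + 1 := by omega
      rw [swap01 w v ⟨k, hkm⟩]
      have hW' : ∀ i : Fin (m + 1), k ≤ (i : ℕ) →
          Function.update v ⟨k, hkm⟩ w i ∈ W := by
        intro i hi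
        rcases eq_or_ne i ⟨k, hkm⟩ with rfl | hne
        · rw [Function.update_self]; exact hw
        · rw [Function.update_of_ne hne]
          refine hvW i ?_
          have hvi : (i : ℕ) ≠ k := fun h => hne (Fin.ext h)
          omega
      have hls : Function.update v ⟨k, hkm⟩ w (Fin.last m) ∈ U := by
        rw [Function.update_of_ne (by
          intro h
          have := congrArg Fin.val h
          simp [Fin.val_last] at this
          omega)]
        exact hlast
      rw [ih (by omega) (v ⟨k, hkm⟩) _ hW' hls, neg_zero]
  -- Conclusion
  intro a u hu
  have hsnoc : Fin.cons (a 0) (Fin.snoc (Fin.tail a) u) = (Fin.snoc a u : Fin (m + 2) → A) := by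
    rw [Fin.cons_snoc_eq_snoc_cons, Fin.cons_self_tail]
  rw [← hsnoc]
  refine Sstat m le_rfl (a 0) (Fin.snoc (Fin.tail a) u) ?_ ?_
  · intro i hi
    have hil : i = Fin.last m := Fin.ext (le_antisymm (Nat.lt_succ_iff.mp i.isLt) hi)
    rw [hil, Fin.snoc_last]
    exact hUle hu
  · rw [Fin.snoc_last]; exact hu
end

section
/- Let (A, ·, ω) be a simple n-Lie Poisson algebra over a field of characteristic zero with 1 ∈ A, and let U be an ideal of the n-Lie algebra A⁽¹⁾ with U⁽³⁾ = 0 (third derived ideal vanishes). Then ω(A, …, A, U⁽¹⁾) = 0, where U⁽¹⁾ = ω(U, U, …, U). -/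
set_option linter.unusedSectionVars false


/-- One step of the derived series: the span of brackets of elements of V. -/
def derived (F : Type*) [Field F] (A : Type*) [CommRing A] [Algebra F A]
    {m : ℕ} (ω : A [⋀^Fin (m + 2)]→ₗ[F] A) (V : Submodule F A) : Submodule F A :=
  Submodule.span F {x | ∃ v : Fin (m + 2) → A, (∀ i, v i ∈ V) ∧ ω v = x}

section NLP8

variable {F : Type*} [Field F] [CharZero F] {A : Type*} [CommRing A] [Algebra F A]

/-- Cancellation of nonzero natural scalars in a module over a char-0 field. -/
lemma NLP8_nsmul_cancel (F : Type*) [Field F] [CharZero F] [Algebra F A]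
    {n : ℕ} (hn : n ≠ 0) {x : A} (h : n • x = 0) : x = 0 := by
  have h2 : (n : F) • x = 0 := by rw [Nat.cast_smul_eq_nsmul]; exact h
  have hnF : (n : F) ≠ 0 := Nat.cast_ne_zero.mpr hn
  calc x = ((n : F)⁻¹ * (n : F)) • x := by rw [inv_mul_cancel₀ hnF, one_smul]
    _ = (n : F)⁻¹ • ((n : F) • x) := by rw [mul_smul]
    _ = 0 := by rw [h2, smul_zero]

lemma NLP8_cast_cancel (F : Type*) [Field F] [CharZero F] [Algebra F A]
    {c : ℕ} (hc : c ≠ 0) {x : A} (h : (c : A) * x = 0) : x = 0 :=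
  NLP8_nsmul_cancel F hc (by rw [nsmul_eq_mul]; exact h)

variable {m : ℕ} (ω : A [⋀^Fin (m + 2)]→ₗ[F] A)

lemma NLP8_cons_add (y : Fin (m + 1) → A) (a b : A) :
    ω (Fin.cons (a + b) y) = ω (Fin.cons a y) + ω (Fin.cons b y) :=
  ω.toMultilinearMap.cons_add y a b

lemma NLP8_cons_smul (y : Fin (m + 1) → A) (c : F) (a : A) :
    ω (Fin.cons (c • a) y) = c • ω (Fin.cons a y) :=
  ω.toMultilinearMap.cons_smul y c a

lemma NLP8_cons_zero (y : Fin (m + 1) → A) : ω (Fin.cons (0 : A) y) = 0 :=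
  ω.map_coord_zero 0 (by simp)

/-- The derivation `a ↦ ω (a, t₁, …, t_{m+1})`. -/
def NLP8_E (hLeib : ∀ (a b : A) (u : Fin (m + 1) → A),
      ω (Fin.cons (a * b) u) = a * ω (Fin.cons b u) + ω (Fin.cons a u) * b)
    (t : Fin (m + 1) → A) : Derivation F A A where
  toFun a := ω (Fin.cons a t)
  map_add' a b := NLP8_cons_add ω t a b
  map_smul' c a := by simpa using NLP8_cons_smul ω t c a
  map_one_eq_zero' := by
    have h := hLeib 1 1 t
    simp only [mul_one, one_mul] at h
    have h2 : ω (Fin.cons (1:A) t) + 0 = ω (Fin.cons (1:A) t) + ω (Fin.cons (1:A) t) := by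
      rw [add_zero]; exact h
    exact (add_left_cancel h2).symm
  leibniz' a b := by
    simp only [LinearMap.coe_mk, AddHom.coe_mk, smul_eq_mul]
    rw [hLeib a b t]; ring

@[simp] lemma NLP8_E_apply (hLeib : ∀ (a b : A) (u : Fin (m + 1) → A),
      ω (Fin.cons (a * b) u) = a * ω (Fin.cons b u) + ω (Fin.cons a u) * b)
    (t : Fin (m + 1) → A) (a : A) :
    NLP8_E ω hLeib t a = ω (Fin.cons a t) := rfl

/-- Iterated Leibniz rule for a derivation. -/
lemma NLP8_iter_mul (D : Derivation F A A) (a b : A) :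
    ∀ n : ℕ, (⇑D)^[n] (a * b)
      = ∑ k ∈ Finset.range (n + 1), n.choose k • ((⇑D)^[k] a * (⇑D)^[n - k] b) := by
  intro n
  induction n with
  | zero => simp
  | succ n ih =>
    rw [Function.iterate_succ_apply', ih, map_sum]
    have step : ∀ k ∈ Finset.range (n + 1),
        D (n.choose k • ((⇑D)^[k] a * (⇑D)^[n - k] b))
          = n.choose k • ((⇑D)^[k] a * (⇑D)^[n + 1 - k] b)
            + n.choose k • ((⇑D)^[k + 1] a * (⇑D)^[n - k] b) := by
      intro k hk
      have hk' : k ≤ n := by simpa using Nat.lt_succ_iff.mp (Finset.mem_range.mp hk)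
      rw [map_nsmul, Derivation.leibniz, smul_eq_mul, smul_eq_mul]
      have h1 : D ((⇑D)^[n - k] b) = (⇑D)^[n + 1 - k] b := by
        rw [show n + 1 - k = (n - k) + 1 by omega]
        exact (Function.iterate_succ_apply' _ _ _).symm
      have h2 : D ((⇑D)^[k] a) = (⇑D)^[k + 1] a := (Function.iterate_succ_apply' _ _ _).symm
      rw [h1, h2, smul_add]
      ring_nf
    rw [Finset.sum_congr rfl step, Finset.sum_add_distrib]
    set X : ℕ → A := fun k => (⇑D)^[k] a * (⇑D)^[n + 1 - k] b with hX
    have hX2 : ∀ k ∈ Finset.range (n + 1),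
        (n.choose k) • ((⇑D)^[k + 1] a * (⇑D)^[n - k] b) = n.choose k • X (k + 1) := by
      intro k hk
      have hk' : k ≤ n := Nat.lt_succ_iff.mp (Finset.mem_range.mp hk)
      have : n + 1 - (k + 1) = n - k := by omega
      rw [hX]; simp only []
      rw [this]
    rw [Finset.sum_congr rfl hX2]
    -- goal: ∑_{k<n+1} C(n,k)•X k + ∑_{k<n+1} C(n,k)•X (k+1) = ∑_{k<n+2} C(n+1,k)•X k
    rw [Finset.sum_range_succ' (fun k => (n + 1).choose k • X k) (n + 1)]
    have pascal : ∀ k, (n + 1).choose (k + 1) • X (k + 1)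
        = n.choose k • X (k + 1) + n.choose (k + 1) • X (k + 1) := by
      intro k; rw [Nat.choose_succ_succ, add_smul]
    rw [Finset.sum_congr rfl (fun k _ => pascal k), Finset.sum_add_distrib]
    rw [Finset.sum_range_succ (fun k => n.choose (k + 1) • X (k + 1)) n]
    rw [Finset.sum_range_succ' (fun k => n.choose k • X k) n]
    simp [Nat.choose_succ_self]
    abel

lemma NLP8_iter_zero (D : Derivation F A A) (k : ℕ) : (⇑D)^[k] (0 : A) = 0 :=
  Function.iterate_fixed (map_zero D) k

/-- A nilpotent derivation of a reduced algebra over a char-0 field is zero. -/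
lemma NLP8_nilp_deriv (hsq : ∀ x : A, x * x = 0 → x = 0) (D : Derivation F A A) :
    ∀ n : ℕ, (∀ a, (⇑D)^[n] a = 0) → ∀ a, D a = 0 := by
  intro n
  induction n with
  | zero =>
    intro h a
    have ha : a = 0 := h a
    rw [ha, map_zero]
  | succ n ih =>
    intro h a
    rcases Nat.eq_zero_or_pos n with rfl | hn
    · simpa using h a
    · refine ih (fun a => ?_) a
      have hhigh : ∀ k : ℕ, n + 1 ≤ k → ∀ x : A, (⇑D)^[k] x = 0 := by
        intro k hk x
        obtain ⟨d, rfl⟩ := Nat.exists_eq_add_of_le hk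
        rw [add_comm, Function.iterate_add_apply, h x, NLP8_iter_zero]
      have hb := NLP8_iter_mul D a a (2 * n)
      have hL : (⇑D)^[2 * n] (a * a) = 0 := hhigh _ (by omega) _
      rw [hL] at hb
      have hb2 : 0 = (2 * n).choose n • ((⇑D)^[n] a * (⇑D)^[n] a) := by
        rw [hb, Finset.sum_eq_single n]
        · have : 2 * n - n = n := by omega
          rw [this]
        · intro b hb' hbn
          rcases lt_or_gt_of_ne hbn with hlt | hgt
          · have h0 : (⇑D)^[2 * n - b] a = 0 := hhigh _ (by omega) _
            rw [h0, mul_zero, smul_zero]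
          · have h0 : (⇑D)^[b] a = 0 := hhigh _ (by omega) _
            rw [h0, zero_mul, smul_zero]
        · intro hnn
          exact absurd (Finset.mem_range.mpr (by omega)) hnn
      have hss : (⇑D)^[n] a * (⇑D)^[n] a = 0 :=
        NLP8_nsmul_cancel F (Nat.choose_pos (by omega)).ne' hb2.symm
      exact hsq _ hss

/-- Derivations preserve nilpotency in characteristic zero. -/
lemma NLP8_deriv_nilpotent (D : Derivation F A A) {x : A} (hx : IsNilpotent x) :
    IsNilpotent (D x) := by
  obtain ⟨n, hn⟩ := hx
  suffices h : ∀ k j, j + k = n → x ^ j * D x ^ (2 * k) = 0 by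
    exact ⟨2 * n, by simpa using h n 0 (by omega)⟩
  intro k
  induction k with
  | zero =>
    intro j hj
    have : j = n := by omega
    simp [this, hn]
  | succ k ih =>
    intro j hj
    have h' : x ^ (j + 1) * D x ^ (2 * k) = 0 := ih (j + 1) (by omega)
    have hDpx : D (x ^ (j + 1)) = (j + 1 : ℕ) • (x ^ j • D x) := by
      rw [D.leibniz_pow, Nat.add_sub_cancel]
    rcases Nat.eq_zero_or_pos k with rfl | hk
    · -- k = 0
      have hx1 : x ^ (j + 1) = 0 := by simpa using h'
      have h0 : D (x ^ (j + 1)) = 0 := by rw [hx1, map_zero]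
      rw [hDpx] at h0
      have hcan : x ^ j • D x = 0 := NLP8_nsmul_cancel F (by omega) h0
      have hcan' : x ^ j * D x = 0 := by simpa [smul_eq_mul] using hcan
      have : x ^ j * D x ^ (2 * (0 + 1)) = (x ^ j * D x) * D x := by ring_nf
      rw [this, hcan', zero_mul]
    · -- k ≥ 1
      have hDy : D (D x ^ (2 * k)) = (2 * k : ℕ) • (D x ^ (2 * k - 1) • D (D x)) := by
        rw [D.leibniz_pow]
      have hD0 : D (x ^ (j + 1) * D x ^ (2 * k)) = 0 := by rw [h', map_zero]
      rw [Derivation.leibniz, hDpx, hDy] at hD0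
      simp only [smul_eq_mul, nsmul_eq_mul] at hD0 h'
      -- hD0 : x^(j+1) * ((2k) * (Dx^(2k-1) * D(Dx))) + Dx^(2k) * ((j+1) * (x^j * Dx)) = 0
      have hexp : D x ^ (2 * k - 1) * D x = D x ^ (2 * k) := by
        rw [← pow_succ]
        congr 1; omega
      have G : ((j + 1 : ℕ) : A) * (x ^ j * D x ^ (2 * (k + 1))) = 0 := by
        have hmul := congrArg (· * D x) hD0
        simp only [add_mul, zero_mul, mul_assoc] at hmul
        -- rearrange
        have e1 : x ^ (j + 1) * (((2 * k : ℕ) : A) * (D x ^ (2 * k - 1) * (D (D x) * D x)))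
            = ((2 * k : ℕ) : A) * D (D x) * (x ^ (j + 1) * D x ^ (2 * k)) := by
          rw [← hexp]; ring
        have e2 : D x ^ (2 * k) * (((j + 1 : ℕ) : A) * (x ^ j * (D x * D x)))
            = ((j + 1 : ℕ) : A) * (x ^ j * D x ^ (2 * (k + 1))) := by
          have : D x ^ (2 * k) * (D x * D x) = D x ^ (2 * (k + 1)) := by
            rw [show 2 * (k + 1) = 2 * k + 2 by omega, pow_add]; ring
          calc D x ^ (2 * k) * (((j + 1 : ℕ) : A) * (x ^ j * (D x * D x)))
              = ((j + 1 : ℕ) : A) * (x ^ j * (D x ^ (2 * k) * (D x * D x))) := by ring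
            _ = _ := by rw [this]
        rw [e1, e2, h', mul_zero, zero_add] at hmul
        exact hmul
      have := NLP8_cast_cancel F (c := j + 1) (by omega) G
      exact this

/-- `ω v` always lies in the span of brackets. -/
lemma NLP8_mem_L (v : Fin (m + 2) → A) : ω v ∈ bracketSpan F A ω :=
  Submodule.subset_span ⟨v, rfl⟩

/-- The "ideal of A⁽¹⁾" property. -/
def NLP8_IP (V : Submodule F A) : Prop :=
  ∀ x ∈ V, ∀ y : Fin (m + 1) → A, (∀ j, y j ∈ bracketSpan F A ω) → ω (Fin.cons x y) ∈ V

lemma NLP8_sign_smul_mem {V : Submodule F A} (u : ℤˣ) {x : A} (h : x ∈ V) : u • x ∈ V := by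
  rcases Int.units_eq_one_or u with rfl | rfl
  · simpa using h
  · have : ((-1 : ℤˣ) : ℤ) • x = -x := by simp
    rw [Units.smul_def, this]
    exact V.neg_mem h

/-- Moving a slot to the front costs a sign. -/
lemma NLP8_perm (v : Fin (m + 2) → A) (i : Fin (m + 2)) :
    ω v = Equiv.Perm.sign (Equiv.swap 0 i) •
      ω (Fin.cons (v i) (Fin.tail (v ∘ Equiv.swap 0 i))) := by
  have h1 : (v ∘ Equiv.swap 0 i) = Fin.cons (v i) (Fin.tail (v ∘ Equiv.swap 0 i)) := by
    have h0 : (v ∘ Equiv.swap 0 i) 0 = v i := by simp [Equiv.swap_apply_left]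
    conv_lhs => rw [← Fin.cons_self_tail (v ∘ Equiv.swap 0 i)]
    rw [h0]
  rw [← h1, AlternatingMap.map_perm, smul_smul, Int.units_mul_self, one_smul]

lemma NLP8_mem_slot {V : Submodule F A} (hV : NLP8_IP ω V) (v : Fin (m + 2) → A)
    (i : Fin (m + 2)) (hi : v i ∈ V) (hall : ∀ j, v j ∈ bracketSpan F A ω) : ω v ∈ V := by
  rw [NLP8_perm ω v i]
  exact NLP8_sign_smul_mem _ (hV _ hi _ (fun j => hall _))

lemma NLP8_derived_le_L (V : Submodule F A) : derived F A ω V ≤ bracketSpan F A ω := by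
  apply Submodule.span_le.mpr
  rintro x ⟨v, hv, rfl⟩
  exact NLP8_mem_L ω v

lemma NLP8_gen_mem_derived {V : Submodule F A} (v : Fin (m + 2) → A) (hv : ∀ i, v i ∈ V) :
    ω v ∈ derived F A ω V :=
  Submodule.subset_span ⟨v, hv, rfl⟩

lemma NLP8_derived_le_self {V : Submodule F A} (hVle : V ≤ bracketSpan F A ω)
    (hV : NLP8_IP ω V) : derived F A ω V ≤ V := by
  apply Submodule.span_le.mpr
  rintro x ⟨v, hv, rfl⟩
  exact NLP8_mem_slot ω hV v 0 (hv 0) (fun j => hVle (hv j))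

lemma NLP8_IP_derived
    (hJac : ∀ (x : Fin (m + 2) → A) (y : Fin (m + 1) → A),
      ω (Fin.cons (ω x) y) =
        ∑ i, ω (Function.update x i (ω (Fin.cons (x i) y))))
    {V : Submodule F A} (hVle : V ≤ bracketSpan F A ω)
    (hV : NLP8_IP ω V) : NLP8_IP ω (derived F A ω V) := by
  intro x hx y hy
  induction hx using Submodule.span_induction with
  | mem x hx =>
    obtain ⟨w, hw, rfl⟩ := hx
    rw [hJac w y]
    apply Submodule.sum_mem
    intro i _
    refine NLP8_gen_mem_derived ω _ (fun j => ?_)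
    rcases eq_or_ne j i with rfl | hne
    · rw [Function.update_self]
      exact hV _ (hw j) _ (fun k => hy k)
    · rw [Function.update_of_ne hne]
      exact hw j
  | zero => rw [NLP8_cons_zero]; exact Submodule.zero_mem _
  | add x y' hx hy' ihx ihy => rw [NLP8_cons_add]; exact Submodule.add_mem _ ihx ihy
  | smul c x hx ihx => rw [NLP8_cons_smul]; exact Submodule.smul_mem _ _ ihx

/-- The key chain lemma. -/
lemma NLP8_chain
    (hLeib : ∀ (a b : A) (u : Fin (m + 1) → A),
      ω (Fin.cons (a * b) u) = a * ω (Fin.cons b u) + ω (Fin.cons a u) * b)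
    (hsq : ∀ x : A, x * x = 0 → x = 0)
    {X Y : Submodule F A}
    (hYX : Y ≤ X) (hXL : X ≤ bracketSpan F A ω) (hYL : Y ≤ bracketSpan F A ω)
    (hX : NLP8_IP ω X) (hY : NLP8_IP ω Y)
    (hXder : ∀ w : Fin (m + 2) → A, (∀ i, w i ∈ X) → ω w ∈ Y)
    (hYder : ∀ w : Fin (m + 2) → A, (∀ i, w i ∈ Y) → ω w = 0) :
    ∀ (n : ℕ) (v : Fin (m + 2) → A) (i₀ : Fin (m + 2)) (s : Finset (Fin (m + 2))),
      s.card = n → i₀ ∉ s → (∀ i ∈ s, v i ∈ X) →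
      (∀ i, i ≠ i₀ → i ∉ s → v i ∈ Y) → ω v = 0 := by
  intro n
  induction n with
  | zero =>
    intro v i₀ s hcard hi₀ hvX hvY
    rw [Finset.card_eq_zero] at hcard
    subst hcard
    set σ := Equiv.swap (0 : Fin (m + 2)) i₀ with hσ
    set t : Fin (m + 1) → A := Fin.tail (v ∘ σ) with htdef
    have hσne : ∀ j : Fin (m + 1), σ j.succ ≠ i₀ := by
      intro j hj
      have h2 : σ (σ j.succ) = σ i₀ := by rw [hj]
      rw [Equiv.swap_apply_self, Equiv.swap_apply_right] at h2
      exact Fin.succ_ne_zero j h2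
    have ht : ∀ j, t j = v (σ j.succ) := fun j => rfl
    have htY : ∀ j, t j ∈ Y := by
      intro j; rw [ht]; exact hvY _ (hσne j) (Finset.notMem_empty _)
    set E := NLP8_E ω hLeib t with hE
    have hE1 : ∀ a, E a ∈ bracketSpan F A ω := fun a => NLP8_mem_L ω _
    have hE2 : ∀ a, a ∈ bracketSpan F A ω → E a ∈ Y := by
      intro a ha
      refine NLP8_mem_slot ω hY (Fin.cons a t) (Fin.succ 0) ?_ ?_
      · rw [Fin.cons_succ]; exact htY 0
      · intro j
        rcases Fin.eq_zero_or_eq_succ j with rfl | ⟨j', rfl⟩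
        · rw [Fin.cons_zero]; exact ha
        · rw [Fin.cons_succ]; exact hYL (htY j')
    have hE3 : ∀ a, a ∈ Y → E a = 0 := by
      intro a ha
      refine hYder (Fin.cons a t) (fun i => ?_)
      rcases Fin.eq_zero_or_eq_succ i with rfl | ⟨j', rfl⟩
      · rw [Fin.cons_zero]; exact ha
      · rw [Fin.cons_succ]; exact htY j'
    have hnil : ∀ a, (⇑E)^[3] a = 0 := by
      intro a
      show E (E (E a)) = 0
      exact hE3 _ (hE2 _ (hE1 a))
    have hEzero := NLP8_nilp_deriv hsq E 3 hnil
    rw [NLP8_perm ω v i₀]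
    have h0 : ω (Fin.cons (v i₀) (Fin.tail (v ∘ Equiv.swap 0 i₀))) = 0 := hEzero (v i₀)
    rw [h0, smul_zero]
  | succ n ih =>
    intro v i₀ s hcard hi₀ hvX hvY
    set σ := Equiv.swap (0 : Fin (m + 2)) i₀ with hσ
    set t : Fin (m + 1) → A := Fin.tail (v ∘ σ) with htdef
    have hσne : ∀ j : Fin (m + 1), σ j.succ ≠ i₀ := by
      intro j hj
      have h2 : σ (σ j.succ) = σ i₀ := by rw [hj]
      rw [Equiv.swap_apply_self, Equiv.swap_apply_right] at h2
      exact Fin.succ_ne_zero j h2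
    have ht : ∀ j, t j = v (σ j.succ) := fun j => rfl
    set st : Finset (Fin (m + 1)) :=
      Finset.univ.filter (fun j => σ j.succ ∈ s) with hstdef
    have hstcard : st.card = n + 1 := by
      rw [← hcard]
      apply Finset.card_bij (fun (j : Fin (m + 1)) (hj : j ∈ st) => σ j.succ)
      · intro j hj
        exact (Finset.mem_filter.mp hj).2
      · intro j1 h1 j2 h2 heq
        exact Fin.succ_injective _ (σ.injective heq)
      · intro i hi
        have hne : σ i ≠ 0 := by
          intro h0
          have : i = σ 0 := by
            have := congrArg σ h0
            rwa [Equiv.swap_apply_self] at this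
          rw [Equiv.swap_apply_left] at this
          exact hi₀ (this ▸ hi)
        obtain ⟨j, hj⟩ := Fin.exists_succ_eq.mpr hne
        refine ⟨j, Finset.mem_filter.mpr ⟨Finset.mem_univ _, ?_⟩, ?_⟩
        · rw [hj, Equiv.swap_apply_self]; exact hi
        · rw [hj, Equiv.swap_apply_self]
    obtain ⟨j₀, hj₀⟩ := Finset.card_pos.mp (by rw [hstcard]; omega)
    have htX : ∀ j ∈ st, t j ∈ X := by
      intro j hj
      rw [ht]
      exact hvX _ (Finset.mem_filter.mp hj).2
    have htY : ∀ j, j ∉ st → t j ∈ Y := by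
      intro j hj
      rw [ht]
      refine hvY _ (hσne j) ?_
      intro hmem
      exact hj (Finset.mem_filter.mpr ⟨Finset.mem_univ _, hmem⟩)
    have htX' : ∀ j, t j ∈ X := by
      intro j
      by_cases hj : j ∈ st
      · exact htX j hj
      · exact hYX (htY j hj)
    have htL : ∀ j, t j ∈ bracketSpan F A ω := fun j => hXL (htX' j)
    set E := NLP8_E ω hLeib t with hE
    have hE1 : ∀ a, E a ∈ bracketSpan F A ω := fun a => NLP8_mem_L ω _
    have hE2 : ∀ a, a ∈ bracketSpan F A ω → E a ∈ X := by
      intro a ha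
      refine NLP8_mem_slot ω hX (Fin.cons a t) j₀.succ ?_ ?_
      · rw [Fin.cons_succ]; exact htX j₀ hj₀
      · intro j
        rcases Fin.eq_zero_or_eq_succ j with rfl | ⟨j', rfl⟩
        · rw [Fin.cons_zero]; exact ha
        · rw [Fin.cons_succ]; exact htL j'
    have hE3 : ∀ a, a ∈ X → E a ∈ Y := by
      intro a ha
      refine hXder (Fin.cons a t) (fun i => ?_)
      rcases Fin.eq_zero_or_eq_succ i with rfl | ⟨j', rfl⟩
      · rw [Fin.cons_zero]; exact ha
      · rw [Fin.cons_succ]; exact htX' j'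
    have hE4 : ∀ a, a ∈ Y → E a = 0 := by
      intro a ha
      set s'' : Finset (Fin (m + 2)) :=
        (st.erase j₀).map ⟨Fin.succ, Fin.succ_injective _⟩ with hs''def
      have hcard'' : s''.card = n := by
        rw [hs''def, Finset.card_map, Finset.card_erase_of_mem hj₀, hstcard]
        omega
      refine ih (Fin.cons a t) j₀.succ s'' hcard'' ?_ ?_ ?_
      · intro hmem
        obtain ⟨j, hj, hjs⟩ := Finset.mem_map.mp hmem
        have : j = j₀ := Fin.succ_injective _ hjs
        subst this
        exact (Finset.mem_erase.mp hj).1 rfl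
      · intro i hi
        obtain ⟨j, hj, rfl⟩ := Finset.mem_map.mp hi
        simp only [Function.Embedding.coeFn_mk]
        rw [Fin.cons_succ]
        exact htX j (Finset.mem_erase.mp hj).2
      · intro i hne hni
        rcases Fin.eq_zero_or_eq_succ i with rfl | ⟨j', rfl⟩
        · rw [Fin.cons_zero]; exact ha
        · rw [Fin.cons_succ]
          refine htY j' ?_
          intro hmem
          have hj'ne : j' ≠ j₀ := by
            intro h; exact hne (by rw [h])
          exact hni (Finset.mem_map.mpr
            ⟨j', Finset.mem_erase.mpr ⟨hj'ne, hmem⟩, rfl⟩)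
    have hnil : ∀ a, (⇑E)^[4] a = 0 := by
      intro a
      show E (E (E (E a))) = 0
      exact hE4 _ (hE3 _ (hE2 _ (hE1 a)))
    have hEzero := NLP8_nilp_deriv hsq E 4 hnil
    rw [NLP8_perm ω v i₀]
    have h0 : ω (Fin.cons (v i₀) (Fin.tail (v ∘ Equiv.swap 0 i₀))) = 0 := hEzero (v i₀)
    rw [h0, smul_zero]

end NLP8

/-- If U is an ideal of A⁽¹⁾ with U⁽³⁾ = 0 in a simple n-Lie Poisson
algebra over a field of characteristic 0 (with 1 ∈ A), then ω(A,…,A, U⁽¹⁾) = 0. -/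
theorem simple_nLiePoisson_solvable_ideal_derived_central
    (F : Type*) [Field F] [CharZero F] (A : Type*) [CommRing A] [Algebra F A]
    (m : ℕ) (ω : A [⋀^Fin (m + 2)]→ₗ[F] A)
    (hJac : ∀ (x : Fin (m + 2) → A) (y : Fin (m + 1) → A),
      ω (Fin.cons (ω x) y) =
        ∑ i, ω (Function.update x i (ω (Fin.cons (x i) y))))
    (hLeib : ∀ (a b : A) (u : Fin (m + 1) → A),
      ω (Fin.cons (a * b) u) = a * ω (Fin.cons b u) + ω (Fin.cons a u) * b)
    (hSimple : ∀ I : Ideal A,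
      (∀ x ∈ I, ∀ v : Fin (m + 1) → A, ω (Fin.cons x v) ∈ I) → I = ⊥ ∨ I = ⊤)
    (U : Submodule F A) (hUle : U ≤ bracketSpan F A ω)
    (hUideal : ∀ u ∈ U, ∀ v : Fin (m + 1) → A,
      (∀ i, v i ∈ bracketSpan F A ω) → ω (Fin.cons u v) ∈ U)
    (hU3 : derived F A ω (derived F A ω (derived F A ω U)) = ⊥) :
    ∀ a : Fin (m + 1) → A, ∀ u ∈ derived F A ω U, ω (Fin.snoc a u) = 0 := by
  intro a u hu
  rcases subsingleton_or_nontrivial A with hA | hA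
  · exact Subsingleton.elim _ _
  -- A is reduced
  have hsq : ∀ x : A, x * x = 0 → x = 0 := by
    have hinv : ∀ x ∈ nilradical A, ∀ v : Fin (m + 1) → A,
        ω (Fin.cons x v) ∈ nilradical A := by
      intro x hx v
      exact mem_nilradical.mpr
        (NLP8_deriv_nilpotent (NLP8_E ω hLeib v) (mem_nilradical.mp hx))
    rcases hSimple (nilradical A) hinv with hbot | htop
    · intro x hx
      have hxm : x ∈ nilradical A := mem_nilradical.mpr ⟨2, by rw [pow_two]; exact hx⟩
      rw [hbot] at hxm
      exact (Ideal.mem_bot).mp hxm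
    · exfalso
      have h1 : (1 : A) ∈ nilradical A := htop ▸ Submodule.mem_top
      obtain ⟨k, hk⟩ := mem_nilradical.mp h1
      rw [one_pow] at hk
      exact one_ne_zero hk
  have hIP_U : NLP8_IP ω U := hUideal
  have hU1L : derived F A ω U ≤ bracketSpan F A ω := NLP8_derived_le_L ω _
  have hIP_U1 : NLP8_IP ω (derived F A ω U) := NLP8_IP_derived ω hJac hUle hIP_U
  have hIP_U2 : NLP8_IP ω (derived F A ω (derived F A ω U)) :=
    NLP8_IP_derived ω hJac hU1L hIP_U1
  have hU2L : derived F A ω (derived F A ω U) ≤ bracketSpan F A ω := NLP8_derived_le_L ω _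
  have hU2U1 : derived F A ω (derived F A ω U) ≤ derived F A ω U :=
    NLP8_derived_le_self ω hU1L hIP_U1
  have hU1U : derived F A ω U ≤ U := NLP8_derived_le_self ω hUle hIP_U
  have hYder0 : ∀ w : Fin (m + 2) → A,
      (∀ i, w i ∈ derived F A ω (derived F A ω U)) → ω w = 0 := by
    intro w hw
    have hmem : ω w ∈ derived F A ω (derived F A ω (derived F A ω U)) :=
      NLP8_gen_mem_derived ω w hw
    rw [hU3] at hmem
    simpa using hmem
  have hchain2 := NLP8_chain ω hLeib hsq hU2U1 hU1L hU2L hIP_U1 hIP_U2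
    (fun w hw => NLP8_gen_mem_derived ω w hw) hYder0
  have hYder1 : ∀ w : Fin (m + 2) → A, (∀ i, w i ∈ derived F A ω U) → ω w = 0 := by
    intro w hw
    refine hchain2 (m + 1) w 0 (Finset.univ.erase 0) ?_ (Finset.notMem_erase _ _)
      (fun i _ => hw i) (fun i hne hni => absurd
        (Finset.mem_erase.mpr ⟨hne, Finset.mem_univ _⟩) hni)
    rw [Finset.card_erase_of_mem (Finset.mem_univ _), Finset.card_univ, Fintype.card_fin]
    omega
  have hchain3 := NLP8_chain ω hLeib hsq hU1U hUle hU1L hIP_U hIP_U1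
    (fun w hw => NLP8_gen_mem_derived ω w hw) hYder1
  have hvanU : ∀ w : Fin (m + 2) → A, (∀ i, w i ∈ U) → ω w = 0 := by
    intro w hw
    refine hchain3 (m + 1) w 0 (Finset.univ.erase 0) ?_ (Finset.notMem_erase _ _)
      (fun i _ => hw i) (fun i hne hni => absurd
        (Finset.mem_erase.mpr ⟨hne, Finset.mem_univ _⟩) hni)
    rw [Finset.card_erase_of_mem (Finset.mem_univ _), Finset.card_univ, Fintype.card_fin]
    omega
  have hu0 : u = 0 := by
    have hle : derived F A ω U ≤ ⊥ := by
      apply Submodule.span_le.mpr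
      rintro x ⟨w, hw, rfl⟩
      simp [hvanU w hw]
    simpa using hle hu
  rw [hu0]
  exact ω.map_coord_zero (Fin.last (m + 1)) (by simp)
end

section
/- Let (A, ·, ω) be an n-Lie Poisson algebra with 1 ∈ A, and let U be an ideal of the n-Lie algebra A⁽¹⁾. Then ω(id_A(U⁽³⁾), A, …, A) ⊆ U, where id_A(X) = X + AX is the associative ideal of A generated by X and U⁽³⁾ is the third derived ideal of U. -/
section Aux

variable {F : Type*} [Field F] {A : Type*} [CommRing A] [Algebra F A] {m : ℕ}
  (ω : A [⋀^Fin (m + 2)]→ₗ[F] A)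

private lemma om_cons_add (x y : A) (v : Fin (m + 1) → A) :
    ω (Fin.cons (x + y) v) = ω (Fin.cons x v) + ω (Fin.cons y v) := by
  have h := ω.map_update_add (Fin.cons x v) 0 x y
  simpa only [Fin.update_cons_zero] using h

private lemma om_cons_sub (x y : A) (v : Fin (m + 1) → A) :
    ω (Fin.cons (x - y) v) = ω (Fin.cons x v) - ω (Fin.cons y v) := by
  have h := ω.map_update_sub (Fin.cons x v) 0 x y
  simpa only [Fin.update_cons_zero] using h

private lemma om_cons_smul (c : F) (x : A) (v : Fin (m + 1) → A) :
    ω (Fin.cons (c • x) v) = c • ω (Fin.cons x v) := by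
  have h := ω.map_update_smul (Fin.cons x v) 0 c x
  simpa only [Fin.update_cons_zero] using h

private lemma om_cons_zero (v : Fin (m + 1) → A) : ω (Fin.cons 0 v) = 0 :=
  ω.map_coord_zero 0 (by simp)

private lemma swap01_eq (p q : A) (r : Fin m → A) :
    (Fin.cons q (Fin.cons p r) : Fin (m + 2) → A)
      = (Fin.cons p (Fin.cons q r) : Fin (m + 2) → A) ∘ Equiv.swap 0 1 := by
  funext i
  induction i using Fin.cases with
  | zero =>
    show q = (Fin.cons p (Fin.cons q r) : Fin (m + 2) → A) (Equiv.swap 0 1 0)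
    rw [Equiv.swap_apply_left, ← Fin.succ_zero_eq_one, Fin.cons_succ, Fin.cons_zero]
  | succ j =>
    induction j using Fin.cases with
    | zero =>
      show (Fin.cons q (Fin.cons p r) : Fin (m + 2) → A) (Fin.succ 0)
          = (Fin.cons p (Fin.cons q r) : Fin (m + 2) → A) (Equiv.swap 0 1 (Fin.succ 0))
      rw [Fin.cons_succ, Fin.cons_zero, Fin.succ_zero_eq_one, Equiv.swap_apply_right,
        Fin.cons_zero]
    | succ k =>
      have h0 : (k.succ.succ : Fin (m + 2)) ≠ 0 := Fin.succ_ne_zero _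
      have h1 : (k.succ.succ : Fin (m + 2)) ≠ 1 := by
        rw [← Fin.succ_zero_eq_one]
        exact fun h => Fin.succ_ne_zero k (Fin.succ_injective _ h)
      show (Fin.cons q (Fin.cons p r) : Fin (m + 2) → A) k.succ.succ
          = (Fin.cons p (Fin.cons q r) : Fin (m + 2) → A) (Equiv.swap 0 1 k.succ.succ)
      rw [Equiv.swap_apply_of_ne_of_ne h0 h1, Fin.cons_succ, Fin.cons_succ, Fin.cons_succ,
        Fin.cons_succ]

private lemma om_swap01 (p q : A) (r : Fin m → A) :
    ω (Fin.cons q (Fin.cons p r)) = - ω (Fin.cons p (Fin.cons q r)) := by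
  rw [swap01_eq p q r]
  exact ω.map_swap _ (by simp : (0 : Fin (m + 2)) ≠ 1)

/-- If some entry of `z` lies in `V` and `ω(V, A, …, A) ⊆ W`, then `ω z ∈ W`. -/
private lemma om_entry_mem {V W : Submodule F A}
    (h : ∀ x ∈ V, ∀ v : Fin (m + 1) → A, ω (Fin.cons x v) ∈ W)
    (z : Fin (m + 2) → A) (i : Fin (m + 2)) (hi : z i ∈ V) : ω z ∈ W := by
  rcases eq_or_ne i 0 with rfl | hne
  · have := h (z 0) hi (Fin.tail z)
    rwa [Fin.cons_self_tail] at this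
  · have h0 : (z ∘ Equiv.swap 0 i) 0 = z i := by simp
    have h2 : ω (z ∘ Equiv.swap 0 i) ∈ W := by
      have := h ((z ∘ Equiv.swap 0 i) 0) (h0 ▸ hi) (Fin.tail (z ∘ Equiv.swap 0 i))
      rwa [Fin.cons_self_tail] at this
    have hs : ω (z ∘ Equiv.swap 0 i) = - ω z := ω.map_swap z (Ne.symm hne)
    have : ω z = - ω (z ∘ Equiv.swap 0 i) := by rw [hs, neg_neg]
    rw [this]
    exact neg_mem h2

end Aux

section Main

variable {F : Type*} [Field F] {A : Type*} [CommRing A] [Algebra F A] {m : ℕ}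
  (ω : A [⋀^Fin (m + 2)]→ₗ[F] A)
  (hJac : ∀ (x : Fin (m + 2) → A) (y : Fin (m + 1) → A),
      ω (Fin.cons (ω x) y) =
        ∑ i, ω (Function.update x i (ω (Fin.cons (x i) y))))
  (hLeib : ∀ (a b : A) (u : Fin (m + 1) → A),
      ω (Fin.cons (a * b) u) = a * ω (Fin.cons b u) + ω (Fin.cons a u) * b)
  (U : Submodule F A) (hUle : U ≤ bracketSpan F A ω)
  (hUideal : ∀ u ∈ U, ∀ v : Fin (m + 1) → A,
      (∀ i, v i ∈ bracketSpan F A ω) → ω (Fin.cons u v) ∈ U)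

include hUideal in
/-- If all entries lie in A⁽¹⁾ and some entry lies in U, the bracket lies in U. -/
private lemma bracket_mem_of_entry (z : Fin (m + 2) → A)
    (hall : ∀ j, z j ∈ bracketSpan F A ω) (i : Fin (m + 2)) (hi : z i ∈ U) : ω z ∈ U := by
  rcases eq_or_ne i 0 with rfl | hne
  · have := hUideal (z 0) hi (Fin.tail z) (fun j => hall _)
    rwa [Fin.cons_self_tail] at this
  · have h0 : (z ∘ Equiv.swap 0 i) 0 = z i := by simp
    have h2 : ω (z ∘ Equiv.swap 0 i) ∈ U := by
      have := hUideal ((z ∘ Equiv.swap 0 i) 0) (h0 ▸ hi)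
        (Fin.tail (z ∘ Equiv.swap 0 i)) (fun j => hall _)
      rwa [Fin.cons_self_tail] at this
    have hs : ω (z ∘ Equiv.swap 0 i) = - ω z := ω.map_swap z (Ne.symm hne)
    have : ω z = - ω (z ∘ Equiv.swap 0 i) := by rw [hs, neg_neg]
    rw [this]
    exact neg_mem h2

include hUle hUideal in
private lemma derived_le_self : derived F A ω U ≤ U := by
  refine Submodule.span_le.mpr ?_
  rintro x ⟨t, ht, rfl⟩
  exact bracket_mem_of_entry ω U hUideal t (fun j => hUle (ht j)) 0 (ht 0)

private lemma derived_mono {V W : Submodule F A} (h : V ≤ W) :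
    derived F A ω V ≤ derived F A ω W := by
  refine Submodule.span_mono ?_
  rintro x ⟨t, ht, rfl⟩
  exact ⟨t, fun i => h (ht i), rfl⟩

include hJac hUle hUideal in
/-- C1 : ω(U⁽¹⁾, A, …, A) ⊆ U. -/
private lemma C1 : ∀ x ∈ derived F A ω U, ∀ v : Fin (m + 1) → A, ω (Fin.cons x v) ∈ U := by
  intro x hx
  induction hx using Submodule.span_induction with
  | mem x hx =>
    obtain ⟨t, ht, rfl⟩ := hx
    intro v
    rw [hJac t v]
    apply Submodule.sum_mem
    intro i _
    have hall : ∀ j, Function.update t i (ω (Fin.cons (t i) v)) j ∈ bracketSpan F A ω := by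
      intro j
      rcases eq_or_ne j i with rfl | hj
      · rw [Function.update_self]
        exact Submodule.subset_span ⟨_, rfl⟩
      · rw [Function.update_of_ne hj]
        exact hUle (ht j)
    rcases eq_or_ne i 0 with rfl | hi0
    · refine bracket_mem_of_entry ω U hUideal _ hall 1 ?_
      rw [Function.update_of_ne (by simp : (1 : Fin (m + 2)) ≠ 0)]
      exact ht 1
    · refine bracket_mem_of_entry ω U hUideal _ hall 0 ?_
      rw [Function.update_of_ne (Ne.symm hi0)]
      exact ht 0
  | zero => intro v; rw [om_cons_zero]; exact zero_mem U
  | add x y hx hy ihx ihy => intro v; rw [om_cons_add]; exact add_mem (ihx v) (ihy v)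
  | smul c x hx ih => intro v; rw [om_cons_smul]; exact Submodule.smul_mem U c (ih v)

include hJac hUle hUideal in
/-- C2 : ω(U⁽²⁾, A, …, A) ⊆ U⁽¹⁾. -/
private lemma C2 : ∀ x ∈ derived F A ω (derived F A ω U), ∀ v : Fin (m + 1) → A,
    ω (Fin.cons x v) ∈ derived F A ω U := by
  intro x hx
  induction hx using Submodule.span_induction with
  | mem x hx =>
    obtain ⟨s, hs, rfl⟩ := hx
    intro v
    rw [hJac s v]
    apply Submodule.sum_mem
    intro i _
    refine Submodule.subset_span ⟨Function.update s i (ω (Fin.cons (s i) v)), fun j => ?_, rfl⟩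
    rcases eq_or_ne j i with rfl | hj
    · rw [Function.update_self]
      exact C1 ω hJac U hUle hUideal (s j) (hs j) v
    · rw [Function.update_of_ne hj]
      exact derived_le_self ω U hUle hUideal (hs j)
  | zero => intro v; rw [om_cons_zero]; exact zero_mem _
  | add x y hx hy ihx ihy => intro v; rw [om_cons_add]; exact add_mem (ihx v) (ihy v)
  | smul c x hx ih => intro v; rw [om_cons_smul]; exact Submodule.smul_mem _ c (ih v)

include hLeib in
/-- The key product identity : ω(x·y, v₀, v') = ω(x, y·v₀, v') + ω(y, x·v₀, v'). -/
private lemma core_id (x y v0 : A) (tv : Fin m → A) :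
    ω (Fin.cons (x * y) (Fin.cons v0 tv))
      = ω (Fin.cons x (Fin.cons (y * v0) tv)) + ω (Fin.cons y (Fin.cons (x * v0) tv)) := by
  have h1 := hLeib x y (Fin.cons v0 tv)
  have h2 := hLeib y v0 (Fin.cons x tv)
  have h3 := hLeib x v0 (Fin.cons y tv)
  have s1 := om_swap01 ω (y * v0) x tv
  have s2 := om_swap01 ω (x * v0) y tv
  have s3 := om_swap01 ω x v0 tv
  have s4 := om_swap01 ω y v0 tv
  have s5 := om_swap01 ω x y tv
  linear_combination h1 - s1 - s2 + h2 + h3 + v0 * s5 + y * s3 + x * s4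

include hJac hLeib hUle hUideal in
/-- ω(x·y, A, …, A) ⊆ U for x, y ∈ U⁽¹⁾. -/
private lemma core_mem (x y : A) (hx : x ∈ derived F A ω U) (hy : y ∈ derived F A ω U)
    (v : Fin (m + 1) → A) : ω (Fin.cons (x * y) v) ∈ U := by
  rw [← Fin.cons_self_tail v, core_id ω hLeib x y (v 0) (Fin.tail v)]
  exact add_mem (C1 ω hJac U hUle hUideal x hx _) (C1 ω hJac U hUle hUideal y hy _)

include hJac hLeib hUle hUideal in
/-- Main step : ω(a·u, A, …, A) ⊆ U for u a generator of U⁽³⁾. -/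
private lemma main_base (a : A) (w : Fin (m + 2) → A)
    (hw : ∀ i, w i ∈ derived F A ω (derived F A ω U)) (v : Fin (m + 1) → A) :
    ω (Fin.cons (a * ω w) v) ∈ U := by
  have hd21 : derived F A ω (derived F A ω U) ≤ derived F A ω U :=
    derived_mono ω (derived_le_self ω U hUle hUideal)
  have hw1 : Fin.cons a (Fin.tail w) 1 ∈ derived F A ω (derived F A ω U) := by
    rw [← Fin.succ_zero_eq_one, Fin.cons_succ]
    exact hw _
  have lb := hLeib a (w 0) (Fin.tail w)
  rw [Fin.cons_self_tail w] at lb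
  have key : a * ω w
      = ω (Fin.cons (a * w 0) (Fin.tail w)) - ω (Fin.cons a (Fin.tail w)) * w 0 := by
    linear_combination -lb
  rw [key, om_cons_sub]
  refine sub_mem ?_ ?_
  · rw [hJac (Fin.cons (a * w 0) (Fin.tail w)) v]
    apply Submodule.sum_mem
    intro i _
    rcases eq_or_ne i 0 with rfl | hi0
    · refine om_entry_mem ω (C1 ω hJac U hUle hUideal) _ 1 ?_
      rw [Function.update_of_ne (by simp : (1 : Fin (m + 2)) ≠ 0)]
      have hw1'' : Fin.cons (a * w 0) (Fin.tail w) 1 ∈ derived F A ω (derived F A ω U) := by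
        rw [← Fin.succ_zero_eq_one, Fin.cons_succ]
        exact hw _
      exact hd21 hw1''
    · refine om_entry_mem ω (C1 ω hJac U hUle hUideal) _ i ?_
      rw [Function.update_self]
      obtain ⟨j, rfl⟩ := Fin.exists_succ_eq_of_ne_zero hi0
      refine C2 ω hJac U hUle hUideal _ ?_ v
      rw [Fin.cons_succ]
      exact hw _
  · refine core_mem ω hJac hLeib U hUle hUideal _ _ ?_ (hd21 (hw 0)) v
    exact om_entry_mem ω (C2 ω hJac U hUle hUideal) _ 1 hw1

end Main

/-- For an ideal U of A⁽¹⁾ in an n-Lie Poisson algebra with 1 ∈ A,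
ω(id_A(U⁽³⁾), A, …, A) ⊆ U, where id_A(X) is the associative ideal generated by X. -/
theorem nLiePoisson_ideal_gen_derived3_bracket_sub
    (F : Type*) [Field F] (A : Type*) [CommRing A] [Algebra F A]
    (m : ℕ) (ω : A [⋀^Fin (m + 2)]→ₗ[F] A)
    (hJac : ∀ (x : Fin (m + 2) → A) (y : Fin (m + 1) → A),
      ω (Fin.cons (ω x) y) =
        ∑ i, ω (Function.update x i (ω (Fin.cons (x i) y))))
    (hLeib : ∀ (a b : A) (u : Fin (m + 1) → A),
      ω (Fin.cons (a * b) u) = a * ω (Fin.cons b u) + ω (Fin.cons a u) * b)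
    (U : Submodule F A) (hUle : U ≤ bracketSpan F A ω)
    (hUideal : ∀ u ∈ U, ∀ v : Fin (m + 1) → A,
      (∀ i, v i ∈ bracketSpan F A ω) → ω (Fin.cons u v) ∈ U) :
    ∀ x ∈ Ideal.span ((derived F A ω (derived F A ω (derived F A ω U)) : Submodule F A) : Set A),
      ∀ v : Fin (m + 1) → A, ω (Fin.cons x v) ∈ U := by
  -- First: for u ∈ U⁽³⁾ and any a, ω(a·u, v) ∈ U.
  have K : ∀ (a u : A), u ∈ derived F A ω (derived F A ω (derived F A ω U)) →
      ∀ v : Fin (m + 1) → A, ω (Fin.cons (a * u) v) ∈ U := by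
    intro a u hu
    induction hu using Submodule.span_induction with
    | mem x hx =>
      obtain ⟨w, hw, rfl⟩ := hx
      exact main_base ω hJac hLeib U hUle hUideal a w hw
    | zero => intro v; rw [mul_zero, om_cons_zero]; exact zero_mem U
    | add x y hx hy ihx ihy =>
      intro v; rw [mul_add, om_cons_add]; exact add_mem (ihx v) (ihy v)
    | smul c x hx ih =>
      intro v; rw [mul_smul_comm, om_cons_smul]; exact Submodule.smul_mem U c (ih v)
  intro x hx
  have main : ∀ (a : A) (v : Fin (m + 1) → A), ω (Fin.cons (a * x) v) ∈ U := by
    induction hx using Submodule.span_induction with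
    | mem z hz => exact fun a v => K a z hz v
    | zero => intro a v; rw [mul_zero, om_cons_zero]; exact zero_mem U
    | add y z hy hz ihy ihz =>
      intro a v; rw [mul_add, om_cons_add]; exact add_mem (ihy a v) (ihz a v)
    | smul r y hy ih =>
      intro a v; rw [smul_eq_mul, ← mul_assoc]; exact ih (a * r) v
  intro v
  have := main 1 v
  rwa [one_mul] at this
end

section
/- Let (A, ·, ω) be a simple n-Lie Poisson algebra over a field of characteristic zero with 1 ∈ A. If I ⊆ A is a nonzero associative ideal such that ω(I, A⁽¹⁾, …, A⁽¹⁾) ⊆ I, then I = A. -/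
section AuxiliaryLemmas

/-- Characteristic-zero cancellation of positive integer factors. -/
theorem auxCharCancel (F : Type*) [Field F] [CharZero F] {A : Type*} [CommRing A]
    [Algebra F A] (k : ℕ) (a : A) (h : ((k + 1 : ℕ) : A) * a = 0) : a = 0 := by
  have h2 : ((k + 1 : ℕ) : F) • a = 0 := by
    rw [Algebra.smul_def, map_natCast]; exact h
  have hne : ((k + 1 : ℕ) : F) ≠ 0 := by exact_mod_cast Nat.succ_ne_zero k
  have h3 : a = ((k + 1 : ℕ) : F)⁻¹ • (((k + 1 : ℕ) : F) • a) := by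
    rw [smul_smul, inv_mul_cancel₀ hne, one_smul]
  rw [h3, h2, smul_zero]

variable {F : Type*} [Field F] [CharZero F] {A : Type*} [CommRing A] [Algebra F A]
  {m : ℕ} (ω : A [⋀^Fin (m + 2)]→ₗ[F] A)

/-- The Leibniz rule holds in every slot (via the alternating property). -/
theorem auxSlotLeibniz
    (hLeib : ∀ (a b : A) (u : Fin (m + 1) → A),
      ω (Fin.cons (a * b) u) = a * ω (Fin.cons b u) + ω (Fin.cons a u) * b)
    (u : Fin (m + 2) → A) (j : Fin (m + 2)) (a b : A) :
    ω (Function.update u j (a * b))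
      = a * ω (Function.update u j b) + b * ω (Function.update u j a) := by
  classical
  set σ := Equiv.swap (0 : Fin (m + 2)) j with hσ
  have hkey : ∀ c : A,
      ω (Fin.cons c (Fin.tail (u ∘ σ))) = Equiv.Perm.sign σ • ω (Function.update u j c) := by
    intro c
    have h1 : (Function.update u j c) ∘ σ = Function.update (u ∘ σ) 0 c := by
      have h := Function.update_comp_equiv u σ j c
      rwa [show σ.symm j = 0 from by simp [hσ]] at h
    have h2 : Function.update (u ∘ σ) 0 c = Fin.cons c (Fin.tail (u ∘ σ)) := by
      conv_lhs => rw [← Fin.cons_self_tail (u ∘ σ)]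
      rw [Fin.update_cons_zero]
    have h3 := ω.map_perm (Function.update u j c) σ
    rw [h1, h2] at h3
    exact h3
  have hab := hkey (a * b)
  have ha := hkey a
  have hb := hkey b
  rw [hLeib, ha, hb] at hab
  rcases Int.units_eq_one_or (Equiv.Perm.sign σ) with hs | hs <;> rw [hs] at hab
  · simp only [one_smul] at hab
    linear_combination -hab
  · simp only [Units.neg_smul, one_smul, Units.val_neg] at hab
    linear_combination hab

/-- A derivation coming from the bracket maps nilpotents to nilpotents (char 0). -/
theorem auxNilpotentBracket
    (hLeib : ∀ (a b : A) (u : Fin (m + 1) → A),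
      ω (Fin.cons (a * b) u) = a * ω (Fin.cons b u) + ω (Fin.cons a u) * b)
    (v : Fin (m + 1) → A) (x : A) (hx : IsNilpotent x) :
    IsNilpotent (ω (Fin.cons x v)) := by
  classical
  set D : A → A := fun a => ω (Fin.cons a v) with hD
  have hDmul : ∀ a b : A, D (a * b) = a * D b + b * D a := by
    intro a b
    show ω (Fin.cons (a * b) v) = a * ω (Fin.cons b v) + b * ω (Fin.cons a v)
    rw [hLeib]; ring
  have hD0 : D 0 = 0 := by
    have h := hDmul 0 0
    rw [mul_zero] at h
    simpa using h
  have hpow : ∀ (a : A) (k : ℕ), D (a ^ (k + 1)) = ((k + 1 : ℕ) : A) * (a ^ k * D a) := by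
    intro a k
    induction k with
    | zero => simp
    | succ k ih =>
      have h1 : a ^ (k + 2) = a * a ^ (k + 1) := by ring
      rw [h1, hDmul, ih]
      push_cast
      ring
  obtain ⟨n, hn⟩ := hx
  cases n with
  | zero =>
    have h1 : (1 : A) = 0 := by simpa using hn
    refine ⟨1, ?_⟩
    rw [pow_one]
    calc D x = D x * 1 := by ring
    _ = 0 := by rw [h1, mul_zero]
  | succ N =>
    have key : ∀ j : ℕ, j ≤ N → x ^ (N - j) * (D x) ^ (2 * j + 1) = 0 := by
      intro j
      induction j with
      | zero =>
        intro _
        have h0 : D (x ^ (N + 1)) = 0 := by rw [hn, hD0]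
        rw [hpow] at h0
        have h1 := auxCharCancel F N _ h0
        simpa using h1
      | succ j ihj =>
        intro hjN
        have hj : j ≤ N := Nat.le_of_succ_le hjN
        have Ej := ihj hj
        set M := N - (j + 1) with hMdef
        have hM : N - j = M + 1 := by omega
        have hder : D (x ^ (N - j) * (D x) ^ (2 * j + 1)) = 0 := by rw [Ej, hD0]
        rw [hDmul] at hder
        have e1 : D ((D x) ^ (2 * j + 1)) = ((2 * j + 1 : ℕ) : A) * ((D x) ^ (2 * j) * D (D x)) := by
          have h := hpow (D x) (2 * j)
          simpa using h
        have e2 : D (x ^ (N - j)) = ((M + 1 : ℕ) : A) * (x ^ M * D x) := by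
          rw [hM, hpow]
        rw [e1, e2] at hder
        have hmul := congrArg (fun z : A => z * D x) hder
        simp only [zero_mul] at hmul
        have hre : (x ^ (N - j) * (((2 * j + 1 : ℕ) : A) * ((D x) ^ (2 * j) * D (D x)))
              + (D x) ^ (2 * j + 1) * (((M + 1 : ℕ) : A) * (x ^ M * D x))) * D x
            = ((2 * j + 1 : ℕ) : A) * ((x ^ (N - j) * (D x) ^ (2 * j + 1)) * D (D x))
              + ((M + 1 : ℕ) : A) * (x ^ M * (D x) ^ (2 * j + 3)) := by
          ring
        rw [hre, Ej] at hmul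
        simp only [zero_mul, mul_zero, zero_add] at hmul
        have h2 := auxCharCancel F M _ hmul
        show x ^ M * (D x) ^ (2 * (j + 1) + 1) = 0
        rw [show 2 * (j + 1) + 1 = 2 * j + 3 from by omega]
        exact h2
    have hfin := key N le_rfl
    exact ⟨2 * N + 1, by simpa using hfin⟩

end AuxiliaryLemmas

/-- In a simple n-Lie Poisson algebra over a field of characteristic 0
(with 1 ∈ A), any nonzero associative ideal I with ω(I, A⁽¹⁾,…,A⁽¹⁾) ⊆ I equals A. -/
theorem simple_nLiePoisson_invariant_ideal_eq_top
    (F : Type*) [Field F] [CharZero F] (A : Type*) [CommRing A] [Algebra F A]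
    (m : ℕ) (ω : A [⋀^Fin (m + 2)]→ₗ[F] A)
    (hJac : ∀ (x : Fin (m + 2) → A) (y : Fin (m + 1) → A),
      ω (Fin.cons (ω x) y) =
        ∑ i, ω (Function.update x i (ω (Fin.cons (x i) y))))
    (hLeib : ∀ (a b : A) (u : Fin (m + 1) → A),
      ω (Fin.cons (a * b) u) = a * ω (Fin.cons b u) + ω (Fin.cons a u) * b)
    (hSimple : ∀ I : Ideal A,
      (∀ x ∈ I, ∀ v : Fin (m + 1) → A, ω (Fin.cons x v) ∈ I) → I = ⊥ ∨ I = ⊤)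
    (I : Ideal A) (hI0 : I ≠ ⊥)
    (hIinv : ∀ x ∈ I, ∀ v : Fin (m + 1) → A,
      (∀ i, v i ∈ bracketSpan F A ω) → ω (Fin.cons x v) ∈ I) :
    I = ⊤ := by
  classical
  set W : Submodule F A := bracketSpan F A ω with hWdef
  have hWmem : ∀ u : Fin (m + 2) → A, ω u ∈ W :=
    fun u => Submodule.subset_span ⟨u, rfl⟩
  -- Step 1 : the nilradical is closed under brackets, hence trivial (or A is the zero ring).
  have hNilClosed : ∀ x ∈ nilradical A, ∀ v : Fin (m + 1) → A,
      ω (Fin.cons x v) ∈ nilradical A := by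
    intro x hx v
    exact mem_nilradical.mpr
      (auxNilpotentBracket (F := F) ω hLeib v x (mem_nilradical.mp hx))
  rcases hSimple (nilradical A) hNilClosed with hred | hnil
  swap
  · -- the whole ring is nilpotent : then 1 = 0 and I = ⊤ trivially.
    have h1 : IsNilpotent (1 : A) := mem_nilradical.mp (hnil ▸ Submodule.mem_top)
    obtain ⟨k, hk⟩ := h1
    rw [one_pow] at hk
    rw [Ideal.eq_top_iff_one]
    rw [hk]
    exact I.zero_mem
  -- Step 2 : A is reduced, hence I * I ≠ ⊥.
  obtain ⟨x, hxI, hx0⟩ := (Submodule.ne_bot_iff I).mp hI0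
  have hxx0 : x * x ≠ 0 := by
    intro h
    apply hx0
    have hnx : IsNilpotent x := ⟨2, by rw [pow_two]; exact h⟩
    have := mem_nilradical.mpr hnx
    rw [hred] at this
    simpa using this
  -- Step 3 : the conductor ideal into C := W ⊔ I², and A = C.
  set C : Submodule F A := W ⊔ Submodule.restrictScalars F (I * I : Ideal A) with hCdef
  have hWleC : ∀ a : A, a ∈ W → a ∈ C := fun a ha => Submodule.mem_sup_left ha
  have hIIleC : ∀ a : A, a ∈ (I * I : Ideal A) → a ∈ C := fun a ha =>
    Submodule.mem_sup_right ((Submodule.restrictScalars_mem F _ a).mpr ha)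
  set J : Ideal A :=
    { carrier := {a : A | ∀ c : A, a * c ∈ C}
      add_mem' := by
        intro a b ha hb c
        have h : (a + b) * c = a * c + b * c := by ring
        rw [h]
        exact C.add_mem (ha c) (hb c)
      zero_mem' := by
        intro c
        rw [zero_mul]
        exact C.zero_mem
      smul_mem' := by
        intro r a ha c
        have h : (r • a) * c = a * (r * c) := by
          rw [smul_eq_mul]; ring
        rw [h]
        exact ha (r * c) } with hJdef
  have hJmem : ∀ a : A, a ∈ J ↔ ∀ c : A, a * c ∈ C := fun a => Iff.rfl
  have hJclosed : ∀ a ∈ J, ∀ v : Fin (m + 1) → A, ω (Fin.cons a v) ∈ J := by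
    intro a ha v
    rw [hJmem] at ha ⊢
    intro c
    have h : ω (Fin.cons a v) * c = ω (Fin.cons (a * c) v) - a * ω (Fin.cons c v) := by
      rw [hLeib a c v]; ring
    rw [h]
    exact C.sub_mem (hWleC _ (hWmem _)) (ha (ω (Fin.cons c v)))
  have hJtop : J = ⊤ := by
    rcases hSimple J hJclosed with h | h
    · exfalso
      have hxxJ : x * x ∈ J := by
        rw [hJmem]
        intro c
        exact hIIleC _ (Ideal.mul_mem_right c _ (Ideal.mul_mem_mul hxI hxI))
      rw [h] at hxxJ
      exact hxx0 (by simpa using hxxJ)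
    · exact h
  have hdecomp : ∀ a : A, a ∈ C := by
    intro a
    have haJ : a ∈ J := by rw [hJtop]; exact Submodule.mem_top
    have := (hJmem a).mp haJ 1
    rwa [mul_one] at this
  -- Step 4 : any bracket with a slot in I * I lands in I.
  have hSUB2 : ∀ (u : Fin (m + 2) → A) (j : Fin (m + 2)) (c : A),
      c ∈ (I * I : Ideal A) → ω (Function.update u j c) ∈ I := by
    intro u j c hc
    refine Submodule.mul_induction_on hc (fun a ha b hb => ?_) (fun a b h1 h2 => ?_)
    · rw [auxSlotLeibniz (F := F) ω hLeib u j a b]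
      exact I.add_mem (Ideal.mul_mem_right _ _ ha) (Ideal.mul_mem_right _ _ hb)
    · rw [ω.map_update_add]
      exact I.add_mem h1 h2
  -- Step 5 : I is closed under all brackets.
  have hKey : ∀ y ∈ I, ∀ v : Fin (m + 1) → A, ω (Fin.cons y v) ∈ I := by
    intro y hyI v
    have aux : ∀ (k : ℕ) (v : Fin (m + 1) → A),
        (∀ i : Fin (m + 1), k ≤ (i : ℕ) → v i ∈ W) → ω (Fin.cons y v) ∈ I := by
      intro k
      induction k with
      | zero =>
        intro v hv
        exact hIinv y hyI v (fun i => hv i (Nat.zero_le _))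
      | succ k ih =>
        intro v hv
        by_cases hk : k < m + 1
        · set i0 : Fin (m + 1) := ⟨k, hk⟩ with hi0
          obtain ⟨w, hw, ξ, hξ, hsum⟩ := Submodule.mem_sup.mp (hdecomp (v i0))
          have hξII : ξ ∈ (I * I : Ideal A) := (Submodule.restrictScalars_mem F _ ξ).mp hξ
          set u : Fin (m + 2) → A := Fin.cons y v with hu
          have he0 : u = Function.update u i0.succ (w + ξ) := by
            have : u i0.succ = w + ξ := by
              rw [hu, Fin.cons_succ, ← hsum]
            rw [← this, Function.update_eq_self]
          have hsplit : ω u = ω (Function.update u i0.succ w)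
              + ω (Function.update u i0.succ ξ) := by
            conv_lhs => rw [he0]
            exact ω.map_update_add u i0.succ w ξ
          have ht2 : ω (Function.update u i0.succ ξ) ∈ I := hSUB2 u i0.succ ξ hξII
          have ht1 : ω (Function.update u i0.succ w) ∈ I := by
            have hupd : Function.update u i0.succ w = Fin.cons y (Function.update v i0 w) := by
              rw [hu, Fin.cons_update]
            rw [hupd]
            apply ih
            intro i hi
            by_cases hii : i = i0
            · rw [hii, Function.update_self]
              exact hw
            · rw [Function.update_of_ne hii]
              apply hv
              have hne : (i : ℕ) ≠ k := by
                intro hik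
                exact hii (Fin.ext (by simp [hi0, hik]))
              omega
          rw [hu] at hsplit
          rw [hsplit]
          exact I.add_mem ht1 ht2
        · apply ih
          intro i hi
          exfalso
          have := i.isLt
          omega
    apply aux (m + 1) v
    intro i hi
    exfalso
    have := i.isLt
    omega
  rcases hSimple I hKey with h | h
  · exact absurd h hI0
  · exact h
end

section
/- Let (A, ·, ω) be an n-Lie Poisson algebra over a field of characteristic zero with no nonzero nilpotent elements, let I be a radical associative ideal of A (√I = I) with ω(I, A⁽¹⁾, …, A⁽¹⁾) ⊆ I. Then for all u ∈ I, a ∈ A, and a₃, …, aₙ ∈ A⁽¹⁾, one has ω(u, a, a₃, …, aₙ)² ∈ I, and consequently ω(I, A, A⁽¹⁾, …, A⁽¹⁾) ⊆ I. -/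
/-- In an n-Lie Poisson algebra over a field of characteristic 0 with
no nonzero nilpotents, if I is a radical ideal with ω(I, A⁽¹⁾,…,A⁽¹⁾) ⊆ I, then
ω(u,a,a₃,…,aₙ)² ∈ I for u ∈ I, a ∈ A, a₃,…,aₙ ∈ A⁽¹⁾, and consequently
ω(I, A, A⁽¹⁾,…,A⁽¹⁾) ⊆ I. -/
theorem nLiePoisson_radical_ideal_step
    (F : Type*) [Field F] [CharZero F] (A : Type*) [CommRing A] [Algebra F A]
    (hred : ∀ a : A, ∀ k : ℕ, 1 ≤ k → a ^ k = 0 → a = 0)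
    (m : ℕ) (ω : A [⋀^Fin (m + 2)]→ₗ[F] A)
    (hJac : ∀ (x : Fin (m + 2) → A) (y : Fin (m + 1) → A),
      ω (Fin.cons (ω x) y) =
        ∑ i, ω (Function.update x i (ω (Fin.cons (x i) y))))
    (hLeib : ∀ (a b : A) (u : Fin (m + 1) → A),
      ω (Fin.cons (a * b) u) = a * ω (Fin.cons b u) + ω (Fin.cons a u) * b)
    (I : Ideal A) (hIrad : I.radical = I)
    (hIinv : ∀ x ∈ I, ∀ v : Fin (m + 1) → A,
      (∀ i, v i ∈ bracketSpan F A ω) → ω (Fin.cons x v) ∈ I) :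
    ∀ u ∈ I, ∀ a : A, ∀ x : Fin m → A, (∀ i, x i ∈ bracketSpan F A ω) →
      (ω (Fin.cons u (Fin.cons a x))) ^ 2 ∈ I ∧ ω (Fin.cons u (Fin.cons a x)) ∈ I := by
  -- swap of the first two arguments
  have swap01 : ∀ (y z : A) (x : Fin m → A),
      ω (Fin.cons y (Fin.cons z x)) = - ω (Fin.cons z (Fin.cons y x)) := by
    intro y z x
    have h : (Fin.cons z (Fin.cons y x) : Fin (m+2) → A) ∘ Equiv.swap 0 1
        = Fin.cons y (Fin.cons z x) := by
      funext i
      refine Fin.cases ?_ (fun j => Fin.cases ?_ (fun k => ?_) j) i <;>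
        simp [Equiv.swap_apply_def, Fin.ext_iff, Function.comp]
    have := ω.map_swap (Fin.cons z (Fin.cons y x)) (show (0 : Fin (m+2)) ≠ 1 by simp)
    rw [h] at this
    exact this
  intro u hu a x hx
  set b := ω (Fin.cons u (Fin.cons a x)) with hb
  -- b is a bracket, hence in bracketSpan
  have hbmem : b ∈ bracketSpan F A ω := Submodule.subset_span ⟨_, rfl⟩
  -- membership of cons vectors in bracketSpan
  have hcons : ∀ z : A, z ∈ bracketSpan F A ω →
      ∀ i, (Fin.cons z x : Fin (m+1) → A) i ∈ bracketSpan F A ω := by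
    intro z hz i
    refine Fin.cases ?_ (fun j => ?_) i
    · simpa using hz
    · simpa using hx j
  -- c = ω(u, b, x) ∈ I
  have hc : ω (Fin.cons u (Fin.cons b x)) ∈ I :=
    hIinv u hu _ (hcons b hbmem)
  set c := ω (Fin.cons u (Fin.cons b x)) with hcdef
  -- ω(a, a, x) = 0
  have haa : ω (Fin.cons a (Fin.cons a x)) = 0 := by
    refine ω.map_eq_zero_of_eq _ (i := 0) (j := 1) ?_ (by simp)
    simp
  -- b * a is a bracket: b * a = ω(u*a, a, x)
  have hba : ω (Fin.cons (u * a) (Fin.cons a x)) = b * a := by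
    rw [hLeib u a (Fin.cons a x), haa]
    ring
  have hbamem : b * a ∈ bracketSpan F A ω := by
    rw [← hba]; exact Submodule.subset_span ⟨_, rfl⟩
  -- ω(u, b*a, x) ∈ I
  have h1 : ω (Fin.cons u (Fin.cons (b * a) x)) ∈ I :=
    hIinv u hu _ (hcons _ hbamem)
  -- expand ω(u, b*a, x) = b^2 + c * a
  have h2 : ω (Fin.cons u (Fin.cons (b * a) x)) = b ^ 2 + c * a := by
    rw [swap01 u (b * a) x, hLeib b a (Fin.cons u x),
      swap01 a u x, swap01 b u x, ← hb, ← hcdef]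
    ring
  have hsq : b ^ 2 ∈ I := by
    have : b ^ 2 = ω (Fin.cons u (Fin.cons (b * a) x)) - c * a := by
      rw [h2]; ring
    rw [this]
    exact I.sub_mem h1 (I.mul_mem_right a hc)
  refine ⟨hsq, ?_⟩
  have : b ∈ I.radical := ⟨2, hsq⟩
  rwa [hIrad] at this
end
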